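/- arXiv:2604.12808 — 8 statements merged into one kernel-verified Lean document; each statement's English description precedes it below -/
import Mathlib

section
/- For every complex matrix A indexed by pairs (i,k), i,k ∈ {1,…,n}, and all indices i,j,k,l, the entry Φ(A)_{(i,k),(j,l)} equals A_{(i,k),(j,l)} if (i = j and k = l) or (i = k and j = l) or (i = l and k = j), and equals 0 otherwise. In other words, Φ is the projection that zeroes out every entry of A except those in positions of the form |i⟩⟨i|⊗|j⟩⟨j|, |i⟩⟨j|⊗|i⟩⟨j|, or |i⟩⟨j|⊗|j⟩⟨i|. -/
/-!
Conjugation by `O_ε ⊗ O_ε` multiplies the entry at `((i, k), (j, l))` by `ε_i ε_k ε_j ε_l`.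
Averaging over `ε` is character orthogonality on `{±1}ⁿ`: the sum of `∏ₓ ε_x ^ c_x` factorises
as `∏ₓ (1 + (-1) ^ c_x)`, which is `2ⁿ` if every index occurs an even number of times among
`i, k, j, l` and `0` otherwise, and four indices have even multiplicities exactly when they
pair up.
-/

open Matrix Kronecker BigOperators

/-- The diagonal sign matrix `O_ε` with diagonal entries `±1` determined by `ε`. -/
noncomputable def signDiag (n : ℕ) (ε : Fin n → Bool) : Matrix (Fin n) (Fin n) ℂ :=
  Matrix.diagonal (fun i => if ε i then 1 else -1)

/-- The local diagonal orthogonal twirl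
`Φ(A) = 2⁻ⁿ ∑_ε (O_ε ⊗ O_ε) A (O_ε ⊗ O_ε)`. -/
noncomputable def twirl {n : ℕ} (A : Matrix (Fin n × Fin n) (Fin n × Fin n) ℂ) :
    Matrix (Fin n × Fin n) (Fin n × Fin n) ℂ :=
  ((2 : ℂ) ^ n)⁻¹ • ∑ ε : Fin n → Bool,
    (signDiag n ε ⊗ₖ signDiag n ε) * A * (signDiag n ε ⊗ₖ signDiag n ε)

open Finset

section BoolSign

variable {ι R : Type*} [CommRing R]

def boolSign (b : Bool) : R := if b then 1 else -1

lemma sum_boolSign_pow (c : ℕ) : ∑ b : Bool, (boolSign b : R) ^ c = 1 + (-1) ^ c := by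
  simp [boolSign]

lemma Multiset.prod_map_eq_prod_univ_pow_count {M : Type*} [CommMonoid M] [Fintype ι]
    [DecidableEq ι] (s : Multiset ι) (f : ι → M) :
    (s.map f).prod = ∏ x, f x ^ s.count x := by
  rw [Finset.prod_multiset_map_count]
  refine prod_subset (subset_univ _) fun x _ hx => ?_
  rw [Multiset.count_eq_zero.mpr (by simpa using hx), pow_zero]

lemma sum_prod_map_boolSign [Fintype ι] [DecidableEq ι] (s : Multiset ι) :
    ∑ ε : ι → Bool, (s.map fun a => (boolSign (ε a) : R)).prod =
      if ∀ x, Even (s.count x) then 2 ^ Fintype.card ι else 0 := by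
  calc _ = ∑ ε : ι → Bool, ∏ x, (boolSign (ε x) : R) ^ s.count x := by
          simp_rw [Multiset.prod_map_eq_prod_univ_pow_count]
    _ = ∏ x, ∑ b : Bool, (boolSign b : R) ^ s.count x := by rw [Fintype.prod_sum]
    _ = ∏ x, (1 + (-1) ^ s.count x) := by simp_rw [sum_boolSign_pow]
    _ = _ := by
      split_ifs with h
      · simp only [(h _).neg_one_pow, one_add_one_eq_two, prod_const, card_univ]
      · obtain ⟨x, hx⟩ := not_forall.mp h
        exact prod_eq_zero (mem_univ x) (by rw [(Nat.not_even_iff_odd.mp hx).neg_one_pow]; ring)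

end BoolSign

lemma forall_even_count_iff {ι : Type*} [DecidableEq ι] (i j k l : ι) :
    (∀ x, Even (({i, k, j, l} : Multiset ι).count x)) ↔
      (i = j ∧ k = l) ∨ (i = k ∧ j = l) ∨ (i = l ∧ k = j) := by
  constructor
  · intro h
    have hi := h i; have hj := h j; have hk := h k
    simp only [Multiset.insert_eq_cons, Multiset.count_cons, Multiset.count_singleton] at hi hj hk
    grind
  · rintro (⟨rfl, rfl⟩ | ⟨rfl, rfl⟩ | ⟨rfl, rfl⟩) x <;>
      simp only [Multiset.insert_eq_cons, Multiset.count_cons, Multiset.count_singleton] <;>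
      split_ifs <;> decide

lemma signDiag_kronecker_signDiag (n : ℕ) (ε : Fin n → Bool) :
    signDiag n ε ⊗ₖ signDiag n ε = diagonal fun p => boolSign (ε p.1) * boolSign (ε p.2) :=
  diagonal_kronecker_diagonal _ _

lemma twirl_apply {n : ℕ} (A : Matrix (Fin n × Fin n) (Fin n × Fin n) ℂ) (i j k l : Fin n) :
    twirl A (i, k) (j, l) = ((2 : ℂ) ^ n)⁻¹ *
      (∑ ε : Fin n → Bool, (({i, k, j, l} : Multiset (Fin n)).map fun a => boolSign (ε a)).prod) *
        A (i, k) (j, l) := by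
  simp only [twirl, Matrix.smul_apply, Matrix.sum_apply, signDiag_kronecker_signDiag, mul_diagonal,
    diagonal_mul, smul_eq_mul, sum_mul, mul_assoc]
  congr 1
  refine sum_congr rfl fun ε _ => ?_
  simp only [Multiset.insert_eq_cons, Multiset.map_cons, Multiset.prod_cons,
    Multiset.map_singleton, Multiset.prod_singleton]
  ring

theorem twirl_entry_general (n : ℕ)
    (A : Matrix (Fin n × Fin n) (Fin n × Fin n) ℂ) (i j k l : Fin n) :
    twirl A (i, k) (j, l) =
      if (i = j ∧ k = l) ∨ (i = k ∧ j = l) ∨ (i = l ∧ k = j)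
      then A (i, k) (j, l) else 0 := by
  rw [twirl_apply, sum_prod_map_boolSign, Fintype.card_fin]
  simp only [forall_even_count_iff]
  split_ifs
  · field_simp
  · simp

/-- The twirl `Φ` zeroes out every entry of `A` except those in positions of the form
`|i⟩⟨i| ⊗ |j⟩⟨j|`, `|i⟩⟨j| ⊗ |i⟩⟨j|`, or `|i⟩⟨j| ⊗ |j⟩⟨i|`. -/
theorem twirl_entry (n : ℕ) (hn : 2 ≤ n)
    (A : Matrix (Fin n × Fin n) (Fin n × Fin n) ℂ) (i j k l : Fin n) :
    twirl A (i, k) (j, l) =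
      if (i = j ∧ k = l) ∨ (i = k ∧ j = l) ∨ (i = l ∧ k = j)
      then A (i, k) (j, l) else 0 :=
  twirl_entry_general n A i j k l
end

section
/- Let ρ_1,…,ρ_N be LDOI positive semidefinite matrices indexed by pairs, let p_1,…,p_N be nonnegative reals, and let (P_1,…,P_N) be a PPT POVM. Then (Φ(P_1),…,Φ(P_N)) is also a PPT POVM, each Φ(P_k) is LDOI, and the success probability is unchanged: ∑_{k=1}^N p_k · Tr(Φ(P_k) ρ_k) = ∑_{k=1}^N p_k · Tr(P_k ρ_k). In particular, the optimal PPT success probability for an ensemble of LDOI states is attained by LDOI measurement operators. -/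
/-!
The matrices `U_ε = O_ε ⊗ O_ε` are Hermitian involutions that form a group
(`U_ε U_δ = U_{ε xnor δ}`), and `Φ` averages conjugation by them. So `Φ` preserves positivity,
fixes every matrix that all `U_ε` commute with (in particular `𝟙` and anything in its own range),
and is self-adjoint for the pairing `(A, B) ↦ Tr(AB)` by cyclicity of the trace; the latter and
`Φ(ρ_k) = ρ_k` give equal success probabilities. Finally, conjugating by the diagonal matrix `U_ε`
multiplies the entry `((i,k),(j,l))` by `ε_i ε_k ε_j ε_l`, which is symmetric under `i ↔ j`, so
`Φ` commutes with `T₁` and preserves PPT.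
-/

open Matrix Kronecker BigOperators
open scoped ComplexOrder

/-- The partial transpose on the first factor: `T₁(M)_{(i,k),(j,l)} = M_{(j,k),(i,l)}`. -/
def ptranspose {n : ℕ} (M : Matrix (Fin n × Fin n) (Fin n × Fin n) ℂ) :
    Matrix (Fin n × Fin n) (Fin n × Fin n) ℂ :=
  Matrix.of fun p q => M (q.1, p.2) (p.1, q.2)

lemma signDiag_mul_signDiag (n : ℕ) (ε δ : Fin n → Bool) :
    signDiag n ε * signDiag n δ = signDiag n (fun i => ε i == δ i) := by
  rw [signDiag, signDiag, signDiag, diagonal_mul_diagonal]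
  congr 1
  funext i
  cases ε i <;> cases δ i <;> norm_num

lemma signDiag_mul_self (n : ℕ) (ε : Fin n → Bool) : signDiag n ε * signDiag n ε = 1 := by
  rw [signDiag_mul_signDiag]
  simp [signDiag]

lemma signDiag_conjTranspose (n : ℕ) (ε : Fin n → Bool) : (signDiag n ε)ᴴ = signDiag n ε := by
  rw [signDiag, diagonal_conjTranspose]
  congr 1
  funext i
  cases h : ε i <;> simp [h]

noncomputable def localSign (n : ℕ) (ε : Fin n → Bool) :
    Matrix (Fin n × Fin n) (Fin n × Fin n) ℂ :=
  signDiag n ε ⊗ₖ signDiag n ε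

section localSign

variable {n : ℕ}

lemma twirl_eq_sum_localSign (A : Matrix (Fin n × Fin n) (Fin n × Fin n) ℂ) :
    twirl A = ((2 : ℂ) ^ n)⁻¹ • ∑ ε, localSign n ε * A * localSign n ε :=
  rfl

lemma localSign_mul_localSign (ε δ : Fin n → Bool) :
    localSign n ε * localSign n δ = localSign n (fun i => ε i == δ i) := by
  simp only [localSign, ← mul_kronecker_mul, signDiag_mul_signDiag]

lemma localSign_mul_self (ε : Fin n → Bool) : localSign n ε * localSign n ε = 1 := by
  rw [localSign, ← mul_kronecker_mul, signDiag_mul_self, one_kronecker_one]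

lemma localSign_conjTranspose (ε : Fin n → Bool) : (localSign n ε)ᴴ = localSign n ε := by
  rw [localSign, conjTranspose_kronecker, signDiag_conjTranspose]

lemma localSign_eq_diagonal (ε : Fin n → Bool) :
    localSign n ε = diagonal fun p : Fin n × Fin n =>
      (if ε p.1 then (1 : ℂ) else -1) * (if ε p.2 then 1 else -1) :=
  diagonal_kronecker_diagonal _ _

lemma twirl_sum {ι : Type*} (s : Finset ι) (A : ι → Matrix (Fin n × Fin n) (Fin n × Fin n) ℂ) :
    twirl (∑ k ∈ s, A k) = ∑ k ∈ s, twirl (A k) := by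
  simp only [twirl_eq_sum_localSign, Finset.mul_sum, Finset.sum_mul, ← Finset.smul_sum]
  rw [Finset.sum_comm]

lemma twirl_eq_self_of_forall_conj_eq {B : Matrix (Fin n × Fin n) (Fin n × Fin n) ℂ}
    (hB : ∀ ε, localSign n ε * B * localSign n ε = B) : twirl B = B := by
  rw [twirl_eq_sum_localSign, Finset.sum_congr rfl fun ε _ => hB ε, Finset.sum_const,
    Finset.card_univ, Fintype.card_fun, Fintype.card_bool, Fintype.card_fin,
    ← Nat.cast_smul_eq_nsmul ℂ, smul_smul, Nat.cast_pow, Nat.cast_ofNat,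
    inv_mul_cancel₀ (by positivity), one_smul]

lemma twirl_one : twirl (1 : Matrix (Fin n × Fin n) (Fin n × Fin n) ℂ) = 1 :=
  twirl_eq_self_of_forall_conj_eq fun ε => by rw [Matrix.mul_one, localSign_mul_self]

lemma localSign_mul_twirl_mul_localSign (δ : Fin n → Bool)
    (A : Matrix (Fin n × Fin n) (Fin n × Fin n) ℂ) :
    localSign n δ * twirl A * localSign n δ = twirl A := by
  have hinv : Function.Involutive fun ε : Fin n → Bool => fun i => ε i == δ i := by
    intro ε
    funext i
    dsimp only
    cases ε i <;> cases δ i <;> rfl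
  have hconj (ε : Fin n → Bool) :
      localSign n δ * (localSign n ε * A * localSign n ε) * localSign n δ =
        localSign n (fun i => ε i == δ i) * A * localSign n (fun i => ε i == δ i) := by
    simp only [← Matrix.mul_assoc, localSign_mul_localSign]
    simp only [Matrix.mul_assoc, localSign_mul_localSign, Bool.beq_comm]
  rw [twirl_eq_sum_localSign, Matrix.mul_smul, Matrix.smul_mul, Finset.mul_sum, Finset.sum_mul,
    Fintype.sum_congr _ _ hconj]
  exact congrArg _ (Equiv.sum_comp (hinv.toPerm _) fun ε => localSign n ε * A * localSign n ε)

lemma twirl_twirl (A : Matrix (Fin n × Fin n) (Fin n × Fin n) ℂ) : twirl (twirl A) = twirl A :=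
  twirl_eq_self_of_forall_conj_eq fun δ => localSign_mul_twirl_mul_localSign δ A

lemma Matrix.PosSemidef.twirl {A : Matrix (Fin n × Fin n) (Fin n × Fin n) ℂ}
    (hA : A.PosSemidef) : (twirl A).PosSemidef := by
  rw [twirl_eq_sum_localSign]
  refine (posSemidef_sum _ fun ε _ => ?_).smul (by positivity)
  simpa only [localSign_conjTranspose] using hA.conjTranspose_mul_mul_same (localSign n ε)

lemma ptranspose_twirl (A : Matrix (Fin n × Fin n) (Fin n × Fin n) ℂ) :
    ptranspose (twirl A) = twirl (ptranspose A) := by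
  ext ⟨i, k⟩ ⟨j, l⟩
  simp only [ptranspose, twirl_eq_sum_localSign, localSign_eq_diagonal, of_apply,
    Matrix.smul_apply, Matrix.sum_apply, diagonal_mul, mul_diagonal]
  congr 1
  refine Finset.sum_congr rfl fun ε _ => ?_
  ring

lemma trace_twirl_mul (A B : Matrix (Fin n × Fin n) (Fin n × Fin n) ℂ) :
    (twirl A * B).trace = (A * twirl B).trace := by
  simp only [twirl_eq_sum_localSign, Matrix.smul_mul, Matrix.mul_smul, trace_smul,
    Finset.sum_mul, Finset.mul_sum, trace_sum]
  congr 1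
  refine Fintype.sum_congr _ _ fun ε => ?_
  rw [Matrix.mul_assoc _ (localSign n ε), trace_mul_comm, trace_mul_comm A]
  simp only [Matrix.mul_assoc]

end localSign

theorem twirl_ppt_povm_general (n N : ℕ)
    (ρ : Fin N → Matrix (Fin n × Fin n) (Fin n × Fin n) ℂ)
    (hρldoi : ∀ k, twirl (ρ k) = ρ k)
    (p : Fin N → ℝ)
    (P : Fin N → Matrix (Fin n × Fin n) (Fin n × Fin n) ℂ)
    (hPpsd : ∀ k, (P k).PosSemidef) (hPsum : ∑ k, P k = 1)
    (hPppt : ∀ k, (ptranspose (P k)).PosSemidef) :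
    (∑ k, twirl (P k) = 1) ∧
    (∀ k, (twirl (P k)).PosSemidef) ∧
    (∀ k, (ptranspose (twirl (P k))).PosSemidef) ∧
    (∀ k, twirl (twirl (P k)) = twirl (P k)) ∧
    (∑ k, (p k : ℂ) * (twirl (P k) * ρ k).trace = ∑ k, (p k : ℂ) * (P k * ρ k).trace) := by
  refine ⟨?_, fun k => (hPpsd k).twirl, fun k => ?_, fun k => twirl_twirl (P k), ?_⟩
  · rw [← twirl_sum, hPsum, twirl_one]
  · rw [ptranspose_twirl]
    exact (hPppt k).twirl
  · refine Finset.sum_congr rfl fun k _ => ?_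
    rw [trace_twirl_mul, hρldoi k]

/-- Twirling a PPT POVM for an ensemble of LDOI states gives a PPT POVM consisting of LDOI
operators with the same success probability. In particular, the optimal PPT success
probability for an ensemble of LDOI states is attained by LDOI measurement operators. -/
theorem twirl_ppt_povm (n N : ℕ) (hn : 2 ≤ n)
    (ρ : Fin N → Matrix (Fin n × Fin n) (Fin n × Fin n) ℂ)
    (hρpsd : ∀ k, (ρ k).PosSemidef) (hρldoi : ∀ k, twirl (ρ k) = ρ k)
    (p : Fin N → ℝ) (hp : ∀ k, 0 ≤ p k)
    (P : Fin N → Matrix (Fin n × Fin n) (Fin n × Fin n) ℂ)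
    (hPpsd : ∀ k, (P k).PosSemidef) (hPsum : ∑ k, P k = 1)
    (hPppt : ∀ k, (ptranspose (P k)).PosSemidef) :
    (∑ k, twirl (P k) = 1) ∧
    (∀ k, (twirl (P k)).PosSemidef) ∧
    (∀ k, (ptranspose (twirl (P k))).PosSemidef) ∧
    (∀ k, twirl (twirl (P k)) = twirl (P k)) ∧
    (∑ k, (p k : ℂ) * (twirl (P k) * ρ k).trace = ∑ k, (p k : ℂ) * (P k * ρ k).trace) :=
  twirl_ppt_povm_general n N ρ hρldoi p P hPpsd hPsum hPppt
end

section
/- Let σ be any permutation of {1,…,n}. Define the family (P_{i,j})_{1≤i,j≤n} by: P_{i,i} = |e_{σ(i)}⟩⟨e_{σ(i)}| ⊗ |e_{σ(i)}⟩⟨e_{σ(i)}| for all i; for i < j, P_{i,j} = |e_i⟩⟨e_i| ⊗ |e_j⟩⟨e_j| and P_{j,i} = |e_j⟩⟨e_j| ⊗ |e_i⟩⟨e_i| if |a_{i,j}| ≥ |a_{j,i}|, and P_{i,j} = |e_j⟩⟨e_j| ⊗ |e_i⟩⟨e_i| and P_{j,i} = |e_i⟩⟨e_i| ⊗ |e_j⟩⟨e_j|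 otherwise. Then (P_{i,j}) is a POVM whose elements are Kronecker products of positive semidefinite matrices (hence separable), ⟨φ_{i,i}, P_{i,i} φ_{i,i}⟩ = |u_{i,σ(i)}|² for all i, ⟨φ_{i,j}, P_{i,j} φ_{i,j}⟩ = max{|a_{i,j}|², |a_{j,i}|²} for all i ≠ j, and its success probability for the uniform ensemble equals (1/n²)·(∑_{i≠j} max{|a_{i,j}|², |a_{j,i}|²} + ∑_{i=1}^n |u_{i,σ(i)}|²). -/
open Matrix Kronecker BigOperators
open scoped ComplexOrder

/-- The vectors of the orthonormal LDOI basis associated to `(U, A)`: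
`φ_{i,i} = ∑_k u_{i,k} e_k ⊗ e_k`;
for `i < j`, `φ_{i,j} = a_{i,j} e_i ⊗ e_j + conj(a_{j,i}) e_j ⊗ e_i` and
`φ_{j,i} = a_{j,i} e_i ⊗ e_j − conj(a_{i,j}) e_j ⊗ e_i`. -/
noncomputable def ldoiBasis {n : ℕ} (U A : Matrix (Fin n) (Fin n) ℂ) (i j : Fin n) :
    (Fin n × Fin n) → ℂ :=
  if i = j then (fun p => if p.1 = p.2 then U i p.1 else 0)
  else if i < j then
    (fun p => if p = (i, j) then A i j else if p = (j, i) then (starRingEnd ℂ) (A j i) else 0)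
  else
    (fun p => if p = (j, i) then A i j else if p = (i, j) then -(starRingEnd ℂ) (A j i) else 0)

/-- The rank-one projection `|e_k⟩⟨e_k|` on `ℂⁿ`. -/
def proj {n : ℕ} (k : Fin n) : Matrix (Fin n) (Fin n) ℂ :=
  Matrix.single k k 1

/-- The local (product) measurement operators from the proof of the LOCC lower bound:
`P_{i,i} = |e_{σ(i)}⟩⟨e_{σ(i)}| ⊗ |e_{σ(i)}⟩⟨e_{σ(i)}|`, and for `i ≠ j` the product projection
determined by which of `|a_{i,j}|, |a_{j,i}|` is larger. -/
noncomputable def locMeas {n : ℕ} (A : Matrix (Fin n) (Fin n) ℂ) (σ : Equiv.Perm (Fin n))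
    (i j : Fin n) : Matrix (Fin n × Fin n) (Fin n × Fin n) ℂ :=
  if i = j then proj (σ i) ⊗ₖ proj (σ i)
  else if i < j then
    (if ‖A j i‖ ≤ ‖A i j‖ then proj i ⊗ₖ proj j else proj j ⊗ₖ proj i)
  else
    (if ‖A i j‖ ≤ ‖A j i‖ then proj i ⊗ₖ proj j else proj j ⊗ₖ proj i)

/-!
Each `locMeas A σ i j` is a product `|e_a⟩⟨e_a| ⊗ |e_b⟩⟨e_b|` of coordinate projections, whose
expectation in a vector `v` is `|v(a,b)|²`; for `i ≠ j` the chosen coordinate of `φ_{i,j}` is the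
larger of `|a_{i,j}|`, `|a_{j,i}|`. The rule choosing between `e_i ⊗ e_j` and `e_j ⊗ e_i` is
symmetric in `i, j`, so each pair `{i, j}` contributes both products, and the diagonal terms are
the `|e_k⟩⟨e_k| ⊗ |e_k⟩⟨e_k|` reindexed by `σ`: every product projection occurs exactly once,
and these sum to `1`.
-/

open Finset

lemma Fintype.sum_sum_ite_swap {α M : Type*} [Fintype α] [AddCommMonoid M] (c : α → α → Prop)
    [DecidableRel c] (hc : ∀ i j, c i j ↔ c j i) (f : α → α → M) :
    ∑ i, ∑ j, (if c i j then f i j else f j i) = ∑ i, ∑ j, f i j := by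
  have split : ∀ g h : α → α → M, ∑ i, ∑ j, (if c i j then g i j else h i j) =
      ∑ i, ∑ j, (if c i j then g i j else 0) + ∑ i, ∑ j, (if c i j then 0 else h i j) := by
    intro g h
    simp_rw [← sum_add_distrib]
    exact Finset.sum_congr rfl fun i _ => Finset.sum_congr rfl fun j _ => by split_ifs <;> simp
  have swap : ∑ i, ∑ j, (if c i j then 0 else f j i) = ∑ i, ∑ j, (if c i j then 0 else f i j) := by
    rw [sum_comm]
    exact Finset.sum_congr rfl fun i _ => Finset.sum_congr rfl fun j _ => by simp only [hc j i]
  rw [split, swap, ← split]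
  simp only [ite_self]

lemma Fintype.sum_sum_ite_eq_perm {α M : Type*} [Fintype α] [DecidableEq α] [AddCommMonoid M]
    (σ : Equiv.Perm α) (f : α → α → M) :
    ∑ i, ∑ j, (if i = j then f (σ i) (σ i) else f i j) = ∑ i, ∑ j, f i j := by
  have row : ∀ (d : α → M) (i : α),
      ∑ j, (if i = j then d i else f i j) = d i + ∑ j ∈ {i}ᶜ, f i j := by
    intro d i
    rw [Fintype.sum_eq_add_sum_compl i, if_pos rfl]
    congr 1
    exact Finset.sum_congr rfl fun j hj => if_neg (by simpa [eq_comm] using hj)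
  calc ∑ i, ∑ j, (if i = j then f (σ i) (σ i) else f i j)
      = ∑ i, f (σ i) (σ i) + ∑ i, ∑ j ∈ {i}ᶜ, f i j := by
        rw [← sum_add_distrib]
        exact Finset.sum_congr rfl fun i _ => row (fun k => f (σ k) (σ k)) i
    _ = ∑ i, f i i + ∑ i, ∑ j ∈ {i}ᶜ, f i j := by rw [Equiv.sum_comp σ fun k => f k k]
    _ = ∑ i, ∑ j, f i j := by
        rw [← sum_add_distrib]
        exact Finset.sum_congr rfl fun i _ => (Fintype.sum_eq_add_sum_compl i (f i)).symm

lemma star_dotProduct_single_one_mulVec {𝕜 m : Type*} [RCLike 𝕜] [Fintype m] [DecidableEq m]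
    (p : m) (v : m → 𝕜) : star v ⬝ᵥ (single p p 1 *ᵥ v) = ((‖v p‖ ^ 2 : ℝ) : 𝕜) := by
  rw [single_mulVec_eq, one_mul, dotProduct_smul, dotProduct_single, mul_one, smul_eq_mul,
    Pi.star_apply, RCLike.star_def, RCLike.mul_conj, RCLike.ofReal_pow]

lemma proj_kronecker_proj {n : ℕ} (a b : Fin n) :
    proj a ⊗ₖ proj b = single (a, b) (a, b) (1 : ℂ) := by
  rw [proj, proj, single_kronecker_single, one_mul]

lemma proj_posSemidef {n : ℕ} (k : Fin n) : (proj k).PosSemidef := by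
  rw [proj, ← diagonal_single]
  exact PosSemidef.diagonal (Pi.single_nonneg.2 zero_le_one)

lemma sum_proj_kronecker_proj (n : ℕ) : ∑ a : Fin n, ∑ b : Fin n, proj a ⊗ₖ proj b = 1 := by
  simp_rw [proj_kronecker_proj, ← Fintype.sum_prod_type']
  exact sum_single_one

section locMeas

variable {n : ℕ} (A : Matrix (Fin n) (Fin n) ℂ) (σ : Equiv.Perm (Fin n))

def KeepsOrder (i j : Fin n) : Prop :=
  if i < j then ‖A j i‖ ≤ ‖A i j‖ else ‖A i j‖ ≤ ‖A j i‖

lemma keepsOrder_comm (i j : Fin n) : KeepsOrder A i j ↔ KeepsOrder A j i := by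
  rcases lt_trichotomy i j with h | rfl | h
  · simp [KeepsOrder, h, h.not_gt]
  · rfl
  · simp [KeepsOrder, h, h.not_gt]

open Classical in
lemma locMeas_eq_ite (i j : Fin n) :
    locMeas A σ i j =
      if KeepsOrder A i j then
        (if i = j then proj (σ i) ⊗ₖ proj (σ i) else proj i ⊗ₖ proj j)
      else (if j = i then proj (σ j) ⊗ₖ proj (σ j) else proj j ⊗ₖ proj i) := by
  rcases lt_trichotomy i j with h | rfl | h
  · simp [locMeas, KeepsOrder, h, h.ne, h.ne']
  · simp [locMeas, KeepsOrder]
  · simp [locMeas, KeepsOrder, h.ne, h.ne', h.not_gt]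

theorem sum_locMeas : ∑ i, ∑ j, locMeas A σ i j = 1 := by
  classical
  simp_rw [locMeas_eq_ite]
  rw [Fintype.sum_sum_ite_swap (KeepsOrder A) (keepsOrder_comm A)
    (fun i j => if i = j then proj (σ i) ⊗ₖ proj (σ i) else proj i ⊗ₖ proj j),
    Fintype.sum_sum_ite_eq_perm σ (fun a b => proj a ⊗ₖ proj b), sum_proj_kronecker_proj]

lemma exists_locMeas_eq_proj_kronecker_proj (i j : Fin n) :
    ∃ a b, locMeas A σ i j = proj a ⊗ₖ proj b := by
  unfold locMeas
  split_ifs <;> exact ⟨_, _, rfl⟩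

lemma exists_locMeas_eq_and_norm_ldoiBasis (U : Matrix (Fin n) (Fin n) ℂ) {i j : Fin n}
    (hij : i ≠ j) : ∃ p : Fin n × Fin n, locMeas A σ i j = proj p.1 ⊗ₖ proj p.2 ∧
      ‖ldoiBasis U A i j p‖ = max ‖A i j‖ ‖A j i‖ := by
  rcases hij.lt_or_gt with h | h
  · by_cases hc : ‖A j i‖ ≤ ‖A i j‖
    · exact ⟨(i, j), by simp [locMeas, h, hc, hij], by simp [ldoiBasis, h, hij, hc]⟩
    · exact ⟨(j, i), by simp [locMeas, h, hc, hij],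
        by simp [ldoiBasis, h, hij, hij.symm, le_of_not_ge hc]⟩
  · by_cases hc : ‖A i j‖ ≤ ‖A j i‖
    · exact ⟨(i, j), by simp [locMeas, h.not_gt, hc, hij],
        by simp [ldoiBasis, h.not_gt, hij, hij.symm, hc]⟩
    · exact ⟨(j, i), by simp [locMeas, h.not_gt, hc, hij],
        by simp [ldoiBasis, h.not_gt, hij, le_of_not_ge hc]⟩

lemma star_ldoiBasis_dotProduct_locMeas_mulVec_diag (U : Matrix (Fin n) (Fin n) ℂ) (i : Fin n) :
    star (ldoiBasis U A i i) ⬝ᵥ (locMeas A σ i i *ᵥ ldoiBasis U A i i) =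
      ((‖U i (σ i)‖ ^ 2 : ℝ) : ℂ) := by
  rw [locMeas, if_pos rfl, proj_kronecker_proj, star_dotProduct_single_one_mulVec]
  simp [ldoiBasis]

lemma star_ldoiBasis_dotProduct_locMeas_mulVec_of_ne (U : Matrix (Fin n) (Fin n) ℂ)
    {i j : Fin n} (hij : i ≠ j) :
    star (ldoiBasis U A i j) ⬝ᵥ (locMeas A σ i j *ᵥ ldoiBasis U A i j) =
      ((max (‖A i j‖ ^ 2) (‖A j i‖ ^ 2) : ℝ) : ℂ) := by
  obtain ⟨p, hP, hp⟩ := exists_locMeas_eq_and_norm_ldoiBasis A σ U hij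
  rw [hP, proj_kronecker_proj, star_dotProduct_single_one_mulVec, hp]
  exact congrArg _ (pow_left_monotoneOn.map_max (norm_nonneg _) (norm_nonneg _))

end locMeas

theorem locMeas_success_general (n : ℕ) (U A : Matrix (Fin n) (Fin n) ℂ)
    (σ : Equiv.Perm (Fin n)) :
    (∑ i, ∑ j, locMeas A σ i j = 1) ∧
    (∀ i j : Fin n, ∃ Q R : Matrix (Fin n) (Fin n) ℂ,
      Q.PosSemidef ∧ R.PosSemidef ∧ locMeas A σ i j = Q ⊗ₖ R) ∧
    (∀ i : Fin n,
      star (ldoiBasis U A i i) ⬝ᵥ (locMeas A σ i i *ᵥ ldoiBasis U A i i) =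
        ((‖U i (σ i)‖ ^ 2 : ℝ) : ℂ)) ∧
    (∀ i j : Fin n, i ≠ j →
      star (ldoiBasis U A i j) ⬝ᵥ (locMeas A σ i j *ᵥ ldoiBasis U A i j) =
        ((max (‖A i j‖ ^ 2) (‖A j i‖ ^ 2) : ℝ) : ℂ)) ∧
    ((1 / (n : ℝ) ^ 2) *
        ∑ i, ∑ j, (star (ldoiBasis U A i j) ⬝ᵥ (locMeas A σ i j *ᵥ ldoiBasis U A i j)).re =
      (1 / (n : ℝ) ^ 2) *
        ((∑ i, ∑ j, if i = j then 0 else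
            max (‖A i j‖ ^ 2) (‖A j i‖ ^ 2)) +
          ∑ i, ‖U i (σ i)‖ ^ 2)) := by
  have diag := star_ldoiBasis_dotProduct_locMeas_mulVec_diag A σ U
  have offDiag : ∀ i j, i ≠ j → _ := fun _ _ ↦
    star_ldoiBasis_dotProduct_locMeas_mulVec_of_ne A σ U
  refine ⟨sum_locMeas A σ, fun i j ↦ ?_, diag, offDiag, ?_⟩
  · obtain ⟨a, b, h⟩ := exists_locMeas_eq_proj_kronecker_proj A σ i j
    exact ⟨_, _, proj_posSemidef a, proj_posSemidef b, h⟩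
  · have term : ∀ i j,
        (star (ldoiBasis U A i j) ⬝ᵥ (locMeas A σ i j *ᵥ ldoiBasis U A i j)).re =
          (if i = j then 0 else max (‖A i j‖ ^ 2) (‖A j i‖ ^ 2)) +
            if i = j then ‖U i (σ i)‖ ^ 2 else 0 := by
      intro i j
      obtain rfl | hij := eq_or_ne i j
      · rw [diag, Complex.ofReal_re]
        simp
      · rw [offDiag i j hij, Complex.ofReal_re]
        simp [hij]
    simp only [term, sum_add_distrib, sum_ite_eq, mem_univ, if_true]

/-- The local measurement `locMeas` is a POVM of Kronecker products of positive semidefinite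
matrices (hence separable), it identifies `φ_{i,i}` with probability `|u_{i,σ(i)}|²` and
`φ_{i,j}` (`i ≠ j`) with probability `max{|a_{i,j}|², |a_{j,i}|²}`, and its success probability
for the uniform ensemble is
`(1/n²)(∑_{i≠j} max{|a_{i,j}|², |a_{j,i}|²} + ∑_i |u_{i,σ(i)}|²)`. -/
theorem locMeas_success (n : ℕ) (hn : 2 ≤ n) (U A : Matrix (Fin n) (Fin n) ℂ)
    (hU : Uᴴ * U = 1)
    (hA : ∀ i j : Fin n, i ≠ j → ‖A i j‖ ^ 2 + ‖A j i‖ ^ 2 = 1)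
    (σ : Equiv.Perm (Fin n)) :
    (∑ i, ∑ j, locMeas A σ i j = 1) ∧
    (∀ i j : Fin n, ∃ Q R : Matrix (Fin n) (Fin n) ℂ,
      Q.PosSemidef ∧ R.PosSemidef ∧ locMeas A σ i j = Q ⊗ₖ R) ∧
    (∀ i : Fin n,
      star (ldoiBasis U A i i) ⬝ᵥ (locMeas A σ i i *ᵥ ldoiBasis U A i i) =
        ((‖U i (σ i)‖ ^ 2 : ℝ) : ℂ)) ∧
    (∀ i j : Fin n, i ≠ j →
      star (ldoiBasis U A i j) ⬝ᵥ (locMeas A σ i j *ᵥ ldoiBasis U A i j) =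
        ((max (‖A i j‖ ^ 2) (‖A j i‖ ^ 2) : ℝ) : ℂ)) ∧
    ((1 / (n : ℝ) ^ 2) *
        ∑ i, ∑ j, (star (ldoiBasis U A i j) ⬝ᵥ (locMeas A σ i j *ᵥ ldoiBasis U A i j)).re =
      (1 / (n : ℝ) ^ 2) *
        ((∑ i, ∑ j, if i = j then 0 else
            max (‖A i j‖ ^ 2) (‖A j i‖ ^ 2)) +
          ∑ i, ‖U i (σ i)‖ ^ 2)) :=
  locMeas_success_general n U A σ
end

section
/- Let c_1,…,c_n be real numbers such that c_i ≥ max_{1≤k≤n} |u_{k,i}|² for all i and c_i·c_j ≥ |a_{i,j}|²·|a_{j,i}|² for all i < j. Then every PPT POVM (P_{i,j})_{1≤i,j≤n} satisfies (1/n²) ∑_{i,j=1}^n ⟨φ_{i,j}, P_{i,j} φ_{i,j}⟩ ≤ (1/n²)·(∑_{i≠j} max{|a_{i,j}|², |a_{j,i}|²} + ∑_{i=1}^n c_i). -/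
open Matrix Kronecker BigOperators
open scoped ComplexOrder

/-!
Let `S = T₁ M` be positive semidefinite. Each term `φ̄_p φ_q M_{p,q}` of `⟨φ, M φ⟩` is the entry
`S_{(q₁,p₂),(p₁,q₂)}`, so by AM–GM on a `2 × 2` principal minor of `S` its real part is at most
`(F(q₁,p₂) S_{(q₁,p₂)} + F(p₁,q₂) S_{(p₁,q₂)}) / 2` as soon as
`|φ_p|² |φ_q|² ≤ F(q₁,p₂) F(p₁,q₂)`. If the support of `φ` meets each row and each column of the
index grid at most once, as for every LDOI vector, the indices `(q₁,p₂)` are pairwise distinct and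
hence `Re ⟨φ, M φ⟩ ≤ ∑_r F_r M_{r,r}`. With `F(i,i) = c_i` and
`F(i,j) = max(|a_{i,j}|², |a_{j,i}|²) ≥ 1/2` the weight condition follows from the hypotheses on
`c`, the normalisation of `A` and `∑_k |u_{i,k}|² = 1`. Summing over the POVM, `∑ P_{i,j} = 𝟙`
collapses the right-hand sides to `∑_r F_r`, which is the bound.
-/

namespace Matrix.PosSemidef

variable {ι : Type*} {S : Matrix ι ι ℂ}

theorem re_apply_self_nonneg (hS : S.PosSemidef) (p : ι) : 0 ≤ (S p p).re :=
  (Complex.nonneg_iff.mp hS.diag_nonneg).1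

variable [Fintype ι] [DecidableEq ι]

theorem quadratic_form_two_entries_nonneg (hS : S.PosSemidef) (p q : ι) (a b : ℂ) :
    0 ≤ ‖a‖ ^ 2 * (S p p).re + 2 * (star a * b * S p q).re + ‖b‖ ^ 2 * (S q q).re := by
  have h := (Complex.nonneg_iff.mp
    (hS.dotProduct_mulVec_nonneg (Pi.single p a + Pi.single q b))).1
  have hqp : S q p = star (S p q) := by simpa using (hS.1.apply q p).symm
  have hnorm : ∀ w : ℂ, star w * w = ((‖w‖ ^ 2 : ℝ) : ℂ) := fun w => by
    rw [Complex.star_def, Complex.conj_mul']; norm_cast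
  have : star (Pi.single p a + Pi.single q b) ⬝ᵥ (S *ᵥ (Pi.single p a + Pi.single q b)) =
      ((‖a‖ ^ 2 : ℝ) : ℂ) * S p p + star a * b * S p q + star (star a * b * S p q)
        + ((‖b‖ ^ 2 : ℝ) : ℂ) * S q q := by
    simp only [← hnorm]
    simp [mulVec_add, dotProduct_add, add_dotProduct, hqp]
    ring
  rw [this] at h
  simp only [Complex.add_re, Complex.re_ofReal_mul, Complex.star_def, Complex.conj_re] at h ⊢
  linarith

theorem re_mul_apply_le (hS : S.PosSemidef) (p q : ι) {z : ℂ} {α β : ℝ} (hα : 0 ≤ α) (hβ : 0 ≤ β)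
    (hz : ‖z‖ ^ 2 ≤ α * β) :
    (z * S p q).re ≤ (α * (S p p).re + β * (S q q).re) / 2 := by
  have hp := hS.re_apply_self_nonneg p
  have hq := hS.re_apply_self_nonneg q
  have hdisc : discrim (‖z‖ ^ 2 * (S p p).re) (-2 * (z * S p q).re) (S q q).re ≤ 0 := by
    -- nonnegativity of the quadratic form at `-(t z̄) eₚ + e_q` for all real `t`
    refine discrim_le_zero fun t => ?_
    have key := hS.quadratic_form_two_entries_nonneg p q (-(t * star z)) 1
    have : (star (-((t : ℂ) * star z)) * 1 * S p q).re = -(t * (z * S p q).re) := by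
      simp [mul_assoc]
    rw [this] at key
    simp only [norm_neg, norm_mul, Complex.norm_real, norm_star, norm_one, Real.norm_eq_abs,
      mul_pow, sq_abs] at key
    linear_combination key
  have hsq : (z * S p q).re ^ 2 ≤ (α * (S p p).re) * (β * (S q q).re) := by
    rw [discrim] at hdisc
    nlinarith [mul_le_mul_of_nonneg_right hz (mul_nonneg hp hq)]
  nlinarith [sq_nonneg (α * (S p p).re - β * (S q q).re), mul_nonneg hα hp, mul_nonneg hβ hq]

end Matrix.PosSemidef

theorem sum_sum_le_sum_of_injOn {α β γ : Type*} [Fintype γ] (s : Finset α) (t : Finset β)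
    (f : α → β → γ)
    (hf : ∀ a ∈ s, ∀ b ∈ t, ∀ a' ∈ s, ∀ b' ∈ t, f a b = f a' b' → a = a' ∧ b = b')
    {w : γ → ℝ} (hw : 0 ≤ w) :
    ∑ a ∈ s, ∑ b ∈ t, w (f a b) ≤ ∑ c, w c := by
  classical
  have hinj : Set.InjOn (fun x : α × β => f x.1 x.2) (s ×ˢ t : Finset _) := by
    rintro ⟨a, b⟩ hab ⟨a', b'⟩ hab' h
    simp only [Finset.coe_product, Set.mem_prod, Finset.mem_coe] at hab hab'
    exact Prod.ext_iff.mpr (hf a hab.1 b hab.2 a' hab'.1 b' hab'.2 h)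
  rw [← Finset.sum_product' (f := fun a b => w (f a b)), ← Finset.sum_image hinj]
  exact Finset.sum_le_univ_sum_of_nonneg hw

section PartialTranspose

variable {n : ℕ} {M : Matrix (Fin n × Fin n) (Fin n × Fin n) ℂ} {F : Fin n × Fin n → ℝ}

theorem re_star_dotProduct_mulVec_le_of_ptranspose (hM : (ptranspose M).PosSemidef)
    (hF : 0 ≤ F) {v : Fin n × Fin n → ℂ}
    (hrow : ∀ p q, v p ≠ 0 → v q ≠ 0 → p.1 = q.1 → p = q)
    (hcol : ∀ p q, v p ≠ 0 → v q ≠ 0 → p.2 = q.2 → p = q)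
    (hv : ∀ p q, v p ≠ 0 → v q ≠ 0 →
      ‖v p‖ ^ 2 * ‖v q‖ ^ 2 ≤ F (q.1, p.2) * F (p.1, q.2)) :
    (star v ⬝ᵥ (M *ᵥ v)).re ≤ ∑ r, F r * (M r r).re := by
  set s := Finset.univ.filter (v · ≠ 0)
  set w : Fin n × Fin n → ℝ := fun r => F r * (M r r).re
  have hw : 0 ≤ w := fun r => mul_nonneg (hF r) (hM.re_apply_self_nonneg r)
  have hexpand : star v ⬝ᵥ (M *ᵥ v) =
      ∑ p ∈ s, ∑ q ∈ s, star (v p) * v q * ptranspose M (q.1, p.2) (p.1, q.2) := by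
    simp only [dotProduct, mulVec, Pi.star_apply, Finset.mul_sum, s]
    rw [Finset.sum_filter_of_ne fun p _ h => ?_]
    · refine Finset.sum_congr rfl fun p _ => ?_
      rw [Finset.sum_filter_of_ne fun q _ h => ?_]
      · exact Finset.sum_congr rfl fun q _ => by rw [ptranspose, of_apply]; ring
      · contrapose! h; simp [h]
    · contrapose! h; simp [h]
  have hsupp : ∀ p ∈ s, v p ≠ 0 := fun p hp => (Finset.mem_filter.mp hp).2
  have hterm : ∀ p ∈ s, ∀ q ∈ s, (star (v p) * v q * ptranspose M (q.1, p.2) (p.1, q.2)).re ≤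
      (w (q.1, p.2) + w (p.1, q.2)) / 2 := fun p hp q hq =>
    hM.re_mul_apply_le _ _ (hF _) (hF _)
      (by simpa [mul_pow] using hv p q (hsupp p hp) (hsupp q hq))
  calc (star v ⬝ᵥ (M *ᵥ v)).re
      = ∑ p ∈ s, ∑ q ∈ s, (star (v p) * v q * ptranspose M (q.1, p.2) (p.1, q.2)).re := by
        simp only [hexpand, Complex.re_sum]
    _ ≤ ∑ p ∈ s, ∑ q ∈ s, (w (q.1, p.2) + w (p.1, q.2)) / 2 :=
        Finset.sum_le_sum fun p hp => Finset.sum_le_sum fun q hq => hterm p hp q hq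
    _ = (∑ p ∈ s, ∑ q ∈ s, w (q.1, p.2) + ∑ p ∈ s, ∑ q ∈ s, w (p.1, q.2)) / 2 := by
        simp only [add_div, Finset.sum_add_distrib, Finset.sum_div]
    _ ≤ (∑ r, w r + ∑ r, w r) / 2 := by
        gcongr
        · refine sum_sum_le_sum_of_injOn s s (fun p q => (q.1, p.2)) ?_ hw
          intro p hp q hq p' hp' q' hq' h
          simp only [Prod.mk.injEq] at h
          exact ⟨hcol p p' (hsupp p hp) (hsupp p' hp') h.2,
            hrow q q' (hsupp q hq) (hsupp q' hq') h.1⟩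
        · refine sum_sum_le_sum_of_injOn s s (fun p q => (p.1, q.2)) ?_ hw
          intro p hp q hq p' hp' q' hq' h
          simp only [Prod.mk.injEq] at h
          exact ⟨hrow p p' (hsupp p hp) (hsupp p' hp') h.1,
            hcol q q' (hsupp q hq) (hsupp q' hq') h.2⟩
    _ = ∑ r, F r * (M r r).re := by ring

theorem re_star_diagVec_mulVec_le (hM : (ptranspose M).PosSemidef) (hF : 0 ≤ F) (u : Fin n → ℂ)
    (hu : ∀ k l, ‖u k‖ ^ 2 * ‖u l‖ ^ 2 ≤ F (l, k) * F (k, l)) :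
    (star (fun p : Fin n × Fin n => if p.1 = p.2 then u p.1 else 0) ⬝ᵥ
      (M *ᵥ fun p => if p.1 = p.2 then u p.1 else 0)).re ≤ ∑ r, F r * (M r r).re := by
  have hdiag : ∀ p : Fin n × Fin n, (if p.1 = p.2 then u p.1 else 0) ≠ 0 → p.1 = p.2 :=
    fun p hp => by_contra fun h => hp (if_neg h)
  refine re_star_dotProduct_mulVec_le_of_ptranspose hM hF ?_ ?_ ?_
  · intro p q hp hq h
    exact Prod.ext h (by rw [← hdiag p hp, ← hdiag q hq, h])
  · intro p q hp hq h
    exact Prod.ext (by rw [hdiag p hp, hdiag q hq, h]) h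
  · intro p q hp hq
    obtain ⟨k, l⟩ := p
    obtain ⟨k', l'⟩ := q
    obtain rfl : k = l := hdiag _ hp
    obtain rfl : k' = l' := hdiag _ hq
    simpa using hu k k'

theorem re_star_offDiagVec_mulVec_le (hM : (ptranspose M).PosSemidef) (hF : 0 ≤ F)
    {i j : Fin n} (hij : i ≠ j) (x y : ℂ) (hx : ‖x‖ ^ 2 ≤ F (i, j)) (hy : ‖y‖ ^ 2 ≤ F (j, i))
    (hxy : ‖x‖ ^ 2 * ‖y‖ ^ 2 ≤ F (i, i) * F (j, j)) :
    (star (fun p => if p = (i, j) then x else if p = (j, i) then y else 0) ⬝ᵥ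
      (M *ᵥ fun p => if p = (i, j) then x else if p = (j, i) then y else 0)).re ≤
      ∑ r, F r * (M r r).re := by
  have hsupp : ∀ p : Fin n × Fin n,
      (if p = (i, j) then x else if p = (j, i) then y else 0) ≠ 0 → p = (i, j) ∨ p = (j, i) := by
    intro p hp
    by_contra! h
    simp [h.1, h.2] at hp
  refine re_star_dotProduct_mulVec_le_of_ptranspose hM hF ?_ ?_ ?_
  · intro p q hp hq h
    rcases hsupp p hp with rfl | rfl <;> rcases hsupp q hq with rfl | rfl <;> simp_all
  · intro p q hp hq h
    rcases hsupp p hp with rfl | rfl <;> rcases hsupp q hq with rfl | rfl <;> simp_all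
  · intro p q hp hq
    have hx' := mul_le_mul hx hx (sq_nonneg _) (hF _)
    have hy' := mul_le_mul hy hy (sq_nonneg _) (hF _)
    rcases hsupp p hp with rfl | rfl <;> rcases hsupp q hq with rfl | rfl <;>
      simp [hij, hij.symm] <;> linarith

end PartialTranspose

theorem sum_norm_sq_row_eq_one {ι : Type*} [Fintype ι] [DecidableEq ι] {U : Matrix ι ι ℂ}
    (hU : U * Uᴴ = 1) (i : ι) : ∑ k, ‖U i k‖ ^ 2 = 1 := by
  have h := congrFun (congrFun hU i) i
  simp only [mul_apply, conjTranspose_apply, one_apply_eq, Complex.star_def,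
    Complex.mul_conj'] at h
  exact_mod_cast h

theorem norm_sq_mul_norm_sq_le_of_mul_conjTranspose_eq_one {ι : Type*} [Fintype ι] [DecidableEq ι]
    {U : Matrix ι ι ℂ} (hU : U * Uᴴ = 1) (i : ι) {k l : ι} (hkl : k ≠ l) :
    ‖U i k‖ ^ 2 * ‖U i l‖ ^ 2 ≤ 1 / 4 := by
  have hpair : ‖U i k‖ ^ 2 + ‖U i l‖ ^ 2 ≤ 1 := by
    rw [← sum_norm_sq_row_eq_one hU i, ← Finset.sum_pair (f := fun x => ‖U i x‖ ^ 2) hkl]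
    exact Finset.sum_le_univ_sum_of_nonneg fun _ => sq_nonneg _
  nlinarith [sq_nonneg (‖U i k‖ ^ 2 - ‖U i l‖ ^ 2), sq_nonneg (‖U i k‖ ^ 2 + ‖U i l‖ ^ 2)]

theorem sum_sum_mul_re_apply_self_of_sum_eq_one {α β m : Type*} [Fintype α] [Fintype β]
    [Fintype m] [DecidableEq m] {P : α → β → Matrix m m ℂ} (hP : ∑ a, ∑ b, P a b = 1)
    (F : m → ℝ) : ∑ a, ∑ b, ∑ r, F r * (P a b r r).re = ∑ r, F r := by
  have hdiag : ∀ r, ∑ a, ∑ b, (P a b r r).re = 1 := fun r => by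
    simpa [Matrix.sum_apply, Complex.re_sum] using congrArg (fun N => (N r r).re) hP
  calc ∑ a, ∑ b, ∑ r, F r * (P a b r r).re = ∑ a, ∑ r, ∑ b, F r * (P a b r r).re :=
        Finset.sum_congr rfl fun _ _ => Finset.sum_comm
    _ = ∑ r, F r * ∑ a, ∑ b, (P a b r r).re := by
        rw [Finset.sum_comm]
        simp only [Finset.mul_sum]
    _ = ∑ r, F r := by simp only [hdiag, mul_one]

section LDOI

variable {n : ℕ}

noncomputable def ldoiWeight (A : Matrix (Fin n) (Fin n) ℂ) (c : Fin n → ℝ) (p : Fin n × Fin n) :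
    ℝ :=
  if p.1 = p.2 then c p.1 else max (‖A p.1 p.2‖ ^ 2) (‖A p.2 p.1‖ ^ 2)

variable {U A : Matrix (Fin n) (Fin n) ℂ} {c : Fin n → ℝ}

@[simp]
theorem ldoiWeight_self (i : Fin n) : ldoiWeight A c (i, i) = c i := if_pos rfl

theorem ldoiWeight_of_ne {i j : Fin n} (h : i ≠ j) :
    ldoiWeight A c (i, j) = max (‖A i j‖ ^ 2) (‖A j i‖ ^ 2) := if_neg h

theorem ldoiWeight_nonneg (hc : ∀ i, 0 ≤ c i) : 0 ≤ ldoiWeight A c := by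
  rintro ⟨i, j⟩
  rcases eq_or_ne i j with rfl | h
  · simpa using hc i
  · rw [ldoiWeight_of_ne h]
    positivity

theorem half_le_ldoiWeight (hA : ∀ i j : Fin n, i ≠ j → ‖A i j‖ ^ 2 + ‖A j i‖ ^ 2 = 1)
    {i j : Fin n} (h : i ≠ j) : 1 / 2 ≤ ldoiWeight A c (i, j) := by
  rw [ldoiWeight_of_ne h]
  linarith [hA i j h, le_max_left (‖A i j‖ ^ 2) (‖A j i‖ ^ 2),
    le_max_right (‖A i j‖ ^ 2) (‖A j i‖ ^ 2)]

theorem sum_ldoiWeight :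
    ∑ p, ldoiWeight A c p =
      (∑ i, ∑ j, if i = j then 0 else max (‖A i j‖ ^ 2) (‖A j i‖ ^ 2)) + ∑ i, c i := by
  rw [Fintype.sum_prod_type, ← Finset.sum_add_distrib]
  refine Finset.sum_congr rfl fun i _ => ?_
  have hsplit : ∀ j, ldoiWeight A c (i, j) =
      (if i = j then 0 else max (‖A i j‖ ^ 2) (‖A j i‖ ^ 2)) + if i = j then c i else 0 := by
    intro j
    rcases eq_or_ne i j with rfl | h
    · simp
    · simp [ldoiWeight_of_ne h, h]
  simp only [hsplit, Finset.sum_add_distrib, Finset.sum_ite_eq, Finset.mem_univ, if_true]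

theorem ldoiBasis_self (i : Fin n) :
    ldoiBasis U A i i = fun p => if p.1 = p.2 then U i p.1 else 0 :=
  if_pos rfl

theorem ldoiBasis_of_lt {i j : Fin n} (h : i < j) :
    ldoiBasis U A i j = fun p =>
      if p = (i, j) then A i j else if p = (j, i) then starRingEnd ℂ (A j i) else 0 := by
  simp [ldoiBasis, h.ne, h]

theorem ldoiBasis_of_gt {i j : Fin n} (h : j < i) :
    ldoiBasis U A i j = fun p =>
      if p = (j, i) then A i j else if p = (i, j) then -starRingEnd ℂ (A j i) else 0 := by
  simp [ldoiBasis, h.ne', h.not_gt]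

theorem re_star_ldoiBasis_mulVec_le (hU : Uᴴ * U = 1)
    (hA : ∀ i j : Fin n, i ≠ j → ‖A i j‖ ^ 2 + ‖A j i‖ ^ 2 = 1)
    (hc1 : ∀ i k : Fin n, ‖U k i‖ ^ 2 ≤ c i)
    (hc2 : ∀ i j : Fin n, i < j → ‖A i j‖ ^ 2 * ‖A j i‖ ^ 2 ≤ c i * c j)
    {M : Matrix (Fin n × Fin n) (Fin n × Fin n) ℂ} (hM : (ptranspose M).PosSemidef) (i j : Fin n) :
    (star (ldoiBasis U A i j) ⬝ᵥ (M *ᵥ ldoiBasis U A i j)).re ≤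
      ∑ r, ldoiWeight A c r * (M r r).re := by
  have hc : ∀ i, 0 ≤ c i := fun i => (sq_nonneg _).trans (hc1 i i)
  have hF : 0 ≤ ldoiWeight A c := ldoiWeight_nonneg hc
  rcases lt_trichotomy i j with h | rfl | h
  · rw [ldoiBasis_of_lt h]
    refine re_star_offDiagVec_mulVec_le hM hF h.ne _ _ ?_ ?_ ?_
    · rw [ldoiWeight_of_ne h.ne]
      exact le_max_left _ _
    · rw [ldoiWeight_of_ne h.ne', Complex.norm_conj]
      exact le_max_left _ _
    · simpa using hc2 i j h
  · rw [ldoiBasis_self]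
    refine re_star_diagVec_mulVec_le hM hF _ fun k l => ?_
    rcases eq_or_ne k l with rfl | hkl
    · simpa using mul_le_mul (hc1 k i) (hc1 k i) (sq_nonneg _) (hc k)
    · calc ‖U i k‖ ^ 2 * ‖U i l‖ ^ 2 ≤ 1 / 2 * (1 / 2) := by
            linarith [norm_sq_mul_norm_sq_le_of_mul_conjTranspose_eq_one
              (mul_eq_one_comm.mp hU) i hkl]
        _ ≤ _ := mul_le_mul (half_le_ldoiWeight hA hkl.symm) (half_le_ldoiWeight hA hkl)
            (by norm_num) (hF _)
  · rw [ldoiBasis_of_gt h]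
    refine re_star_offDiagVec_mulVec_le hM hF h.ne _ _ ?_ ?_ ?_
    · rw [ldoiWeight_of_ne h.ne]
      exact le_max_right _ _
    · rw [ldoiWeight_of_ne h.ne', norm_neg, Complex.norm_conj]
      exact le_max_right _ _
    · simpa [mul_comm] using hc2 j i h

end LDOI

theorem ppt_upper_bound_general (n : ℕ) (U A : Matrix (Fin n) (Fin n) ℂ)
    (hU : Uᴴ * U = 1)
    (hA : ∀ i j : Fin n, i ≠ j → ‖A i j‖ ^ 2 + ‖A j i‖ ^ 2 = 1)
    (c : Fin n → ℝ)
    (hc1 : ∀ i k : Fin n, ‖U k i‖ ^ 2 ≤ c i)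
    (hc2 : ∀ i j : Fin n, i < j →
      ‖A i j‖ ^ 2 * ‖A j i‖ ^ 2 ≤ c i * c j)
    (P : Fin n → Fin n → Matrix (Fin n × Fin n) (Fin n × Fin n) ℂ)
    (hPsum : ∑ i, ∑ j, P i j = 1)
    (hPppt : ∀ i j, (ptranspose (P i j)).PosSemidef) :
    (1 / (n : ℝ) ^ 2) *
        ∑ i, ∑ j, (star (ldoiBasis U A i j) ⬝ᵥ (P i j *ᵥ ldoiBasis U A i j)).re ≤
      (1 / (n : ℝ) ^ 2) *
        ((∑ i, ∑ j, if i = j then 0 else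
            max (‖A i j‖ ^ 2) (‖A j i‖ ^ 2)) +
          ∑ i, c i) := by
  refine mul_le_mul_of_nonneg_left ?_ (by positivity)
  calc ∑ i, ∑ j, (star (ldoiBasis U A i j) ⬝ᵥ (P i j *ᵥ ldoiBasis U A i j)).re
      ≤ ∑ i, ∑ j, ∑ r, ldoiWeight A c r * (P i j r r).re :=
        Finset.sum_le_sum fun i _ => Finset.sum_le_sum fun j _ =>
          re_star_ldoiBasis_mulVec_le hU hA hc1 hc2 (hPppt i j) i j
    _ = ∑ r, ldoiWeight A c r := sum_sum_mul_re_apply_self_of_sum_eq_one hPsum _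
    _ = _ := sum_ldoiWeight

/-- PPT upper bound: if `c_i ≥ max_k |u_{k,i}|²` for all `i` and
`c_i c_j ≥ |a_{i,j}|² |a_{j,i}|²` for all `i < j`, then every PPT POVM distinguishing the
uniform ensemble over the orthonormal LDOI basis has success probability at most
`(1/n²)(∑_{i≠j} max{|a_{i,j}|², |a_{j,i}|²} + ∑_i c_i)`. -/
theorem ppt_upper_bound (n : ℕ) (hn : 2 ≤ n) (U A : Matrix (Fin n) (Fin n) ℂ)
    (hU : Uᴴ * U = 1)
    (hA : ∀ i j : Fin n, i ≠ j → ‖A i j‖ ^ 2 + ‖A j i‖ ^ 2 = 1)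
    (c : Fin n → ℝ)
    (hc1 : ∀ i k : Fin n, ‖U k i‖ ^ 2 ≤ c i)
    (hc2 : ∀ i j : Fin n, i < j →
      ‖A i j‖ ^ 2 * ‖A j i‖ ^ 2 ≤ c i * c j)
    (P : Fin n → Fin n → Matrix (Fin n × Fin n) (Fin n × Fin n) ℂ)
    (hPpsd : ∀ i j, (P i j).PosSemidef) (hPsum : ∑ i, ∑ j, P i j = 1)
    (hPppt : ∀ i j, (ptranspose (P i j)).PosSemidef) :
    (1 / (n : ℝ) ^ 2) *
        ∑ i, ∑ j, (star (ldoiBasis U A i j) ⬝ᵥ (P i j *ᵥ ldoiBasis U A i j)).re ≤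
      (1 / (n : ℝ) ^ 2) *
        ((∑ i, ∑ j, if i = j then 0 else
            max (‖A i j‖ ^ 2) (‖A j i‖ ^ 2)) +
          ∑ i, c i) :=
  ppt_upper_bound_general n U A hU hA c hc1 hc2 P hPsum hPppt
end

section
/- Let n = 2 and let α, β, γ, δ ∈ ℂ satisfy |α|² + |β|² = 1 and |γ|² + |δ|² = 1. Define φ₁ = α·e₁⊗e₁ + conj(β)·e₂⊗e₂, φ₂ = β·e₁⊗e₁ − conj(α)·e₂⊗e₂, φ₃ = γ·e₁⊗e₂ + conj(δ)·e₂⊗e₁, φ₄ = δ·e₁⊗e₂ − conj(γ)·e₂⊗e₁, and set V = (1/2)·(max{|α|², |β|²} + max{|γ|², |δ|²}). Then: (1) every PPT POVM (P_1, P_2, P_3, P_4) satisfies (1/4) ∑_{k=1}^4 ⟨φ_k, P_k φ_k⟩ ≤ V; and (2) there exists a POVM whose elements are Kronecker products of positive semidefinite 2×2 matrices with (1/4) ∑_{k=1}^4 ⟨φ_k, P_k φ_k⟩ = V. -/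
open Matrix Kronecker BigOperators
open scoped ComplexOrder

/-- The two-qubit orthonormal LDOI basis
`φ₁ = α e₁⊗e₁ + conj(β) e₂⊗e₂`, `φ₂ = β e₁⊗e₁ − conj(α) e₂⊗e₂`,
`φ₃ = γ e₁⊗e₂ + conj(δ) e₂⊗e₁`, `φ₄ = δ e₁⊗e₂ − conj(γ) e₂⊗e₁`. -/
noncomputable def twoQubitBasis (α β γ δ : ℂ) : Fin 4 → (Fin 2 × Fin 2) → ℂ :=
  ![fun p => if p = (0, 0) then α else if p = (1, 1) then (starRingEnd ℂ) β else 0,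
    fun p => if p = (0, 0) then β else if p = (1, 1) then -(starRingEnd ℂ) α else 0,
    fun p => if p = (0, 1) then γ else if p = (1, 0) then (starRingEnd ℂ) δ else 0,
    fun p => if p = (0, 1) then δ else if p = (1, 0) then -(starRingEnd ℂ) γ else 0]

/-!
The upper bound is weak duality for the PPT relaxation. Put `m = max(|α|², |β|²)`,
`M = max(|γ|², |δ|²)` and `Y = diag(m, M, M, m)` on the basis `e_i ⊗ e_j`. Each `φ_k` is
`z₁ e_i ⊗ e_j + z₂ e_k ⊗ e_l` with `i ≠ k`, `j ≠ l`; the cross term of `P` between these two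
basis vectors is an entry of `T₁(P)`, hence bounded by `|z₁ z₂|` times the diagonal of `P` at
`(k, j)` and `(i, l)`. As `|z₁ z₂| ≤ 1/2 ≤` either maximum, `⟨φ_k, P φ_k⟩ ≤ tr(Y P)` for every PPT
element `P`, and summing over a POVM gives `∑_k ⟨φ_k, P_k φ_k⟩ ≤ tr Y = 2(m + M)`.

Equality is attained by measuring in the product basis `e_i ⊗ e_j` and answering, on each
outcome, the state whose larger amplitude sits there.
-/

section QuadraticForm

variable {ι : Type*} [Fintype ι] [DecidableEq ι]

theorem re_star_dotProduct_mulVec_single_add_single {N : Matrix ι ι ℂ} (hN : N.IsHermitian)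
    (p q : ι) (a b : ℂ) :
    (star (Pi.single p a + Pi.single q b) ⬝ᵥ (N *ᵥ (Pi.single p a + Pi.single q b))).re =
      ‖a‖ ^ 2 * (N p p).re + ‖b‖ ^ 2 * (N q q).re + 2 * (star a * b * N p q).re := by
  have hqp : N q p = star (N p q) := by rw [← hN.apply p q, star_star]
  have hpp : (N p p).im = 0 := Complex.conj_eq_iff_im.mp (hN.apply p p)
  have hqq : (N q q).im = 0 := Complex.conj_eq_iff_im.mp (hN.apply q q)
  simp only [star_add, Pi.star_single, mulVec_add, mulVec_single, add_dotProduct,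
    dotProduct_add, single_dotProduct]
  simp only [Pi.smul_apply, MulOpposite.smul_eq_mul_unop, MulOpposite.unop_op, col_apply, hqp]
  simp only [Complex.add_re, Complex.mul_re, Complex.mul_im, Complex.star_def, Complex.conj_re,
    Complex.conj_im, Complex.sq_norm, Complex.normSq_apply, hpp, hqq]
  ring

theorem Matrix.PosSemidef.two_mul_re_mul_le {N : Matrix ι ι ℂ} (hN : N.PosSemidef) (p q : ι)
    (w : ℂ) :
    2 * (w * N p q).re ≤ ‖w‖ * ((N p p).re + (N q q).re) := by
  rcases eq_or_ne w 0 with rfl | hw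
  · simp
  have hform := (Complex.nonneg_iff.mp
    (hN.dotProduct_mulVec_nonneg (Pi.single p (star w) + Pi.single q (-(‖w‖ : ℂ))))).1
  rw [re_star_dotProduct_mulVec_single_add_single hN.isHermitian] at hform
  have hcross : (star (star w) * -(‖w‖ : ℂ) * N p q).re = -‖w‖ * (w * N p q).re := by
    simp only [star_star, neg_mul, mul_comm w, mul_assoc, Complex.neg_re, Complex.re_ofReal_mul]
  rw [hcross, norm_star, norm_neg, Complex.norm_real, Real.norm_of_nonneg (norm_nonneg w)] at hform
  have hw' : 0 < ‖w‖ := norm_pos_iff.mpr hw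
  nlinarith

end QuadraticForm

theorem Matrix.PosSemidef.re_diag_nonneg {ι : Type*} {N : Matrix ι ι ℂ} (hN : N.PosSemidef)
    (p : ι) : 0 ≤ (N p p).re :=
  (Complex.nonneg_iff.mp hN.diag_nonneg).1

section PartialTranspose

variable {n : ℕ} {P : Matrix (Fin n × Fin n) (Fin n × Fin n) ℂ}

/-- The cross term `P (i, j) (k, l)` is the entry `T₁(P) (k, j) (i, l)`. -/
theorem re_star_dotProduct_mulVec_single_add_single_le (hP : P.IsHermitian)
    (hT : (ptranspose P).PosSemidef) (i j k l : Fin n) (z₁ z₂ : ℂ) :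
    (star (Pi.single (i, j) z₁ + Pi.single (k, l) z₂) ⬝ᵥ
        (P *ᵥ (Pi.single (i, j) z₁ + Pi.single (k, l) z₂))).re ≤
      ‖z₁‖ ^ 2 * (P (i, j) (i, j)).re + ‖z₂‖ ^ 2 * (P (k, l) (k, l)).re +
        ‖z₁‖ * ‖z₂‖ * ((P (k, j) (k, j)).re + (P (i, l) (i, l)).re) := by
  have hcross := hT.two_mul_re_mul_le (k, j) (i, l) (star z₁ * z₂)
  rw [norm_mul, norm_star] at hcross
  rw [re_star_dotProduct_mulVec_single_add_single hP]
  exact add_le_add_right hcross _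

end PartialTranspose

theorem Fin.sum_univ_two_of_ne {M : Type*} [AddCommMonoid M] (f : Fin 2 → M) {i k : Fin 2}
    (hik : i ≠ k) : ∑ x, f x = f i + f k := by
  fin_cases i <;> fin_cases k <;> simp_all [Fin.sum_univ_two, add_comm]

theorem Fin.sum_prod_two_eq {M : Type*} [AddCommMonoid M] (f : Fin 2 × Fin 2 → M)
    {i k j l : Fin 2} (hik : i ≠ k) (hjl : j ≠ l) :
    ∑ p, f p = f (i, j) + f (k, l) + f (k, j) + f (i, l) := by
  rw [Fintype.sum_prod_type, Fin.sum_univ_two_of_ne _ hik, Fin.sum_univ_two_of_ne _ hjl,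
    Fin.sum_univ_two_of_ne _ hjl]
  abel

theorem re_star_dotProduct_mulVec_single_add_single_le_sum
    {P : Matrix (Fin 2 × Fin 2) (Fin 2 × Fin 2) ℂ} (hP : P.PosSemidef)
    (hT : (ptranspose P).PosSemidef) (w : Fin 2 × Fin 2 → ℝ)
    {i k j l : Fin 2} (hik : i ≠ k) (hjl : j ≠ l) {z₁ z₂ : ℂ}
    (h₁ : ‖z₁‖ ^ 2 ≤ w (i, j)) (h₂ : ‖z₂‖ ^ 2 ≤ w (k, l))
    (h₃ : ‖z₁‖ * ‖z₂‖ ≤ w (k, j)) (h₄ : ‖z₁‖ * ‖z₂‖ ≤ w (i, l)) :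
    (star (Pi.single (i, j) z₁ + Pi.single (k, l) z₂) ⬝ᵥ
        (P *ᵥ (Pi.single (i, j) z₁ + Pi.single (k, l) z₂))).re ≤ ∑ p, w p * (P p p).re := by
  rw [Fin.sum_prod_two_eq (fun p => w p * (P p p).re) hik hjl]
  refine (re_star_dotProduct_mulVec_single_add_single_le hP.isHermitian hT i j k l z₁ z₂).trans ?_
  have h := hP.re_diag_nonneg
  linarith [mul_le_mul_of_nonneg_right h₁ (h (i, j)), mul_le_mul_of_nonneg_right h₂ (h (k, l)),
    mul_le_mul_of_nonneg_right h₃ (h (k, j)), mul_le_mul_of_nonneg_right h₄ (h (i, l))]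

theorem sum_re_star_dotProduct_mulVec_le_sum {ι κ : Type*} [Fintype ι] [Fintype κ]
    [DecidableEq κ] {P : ι → Matrix κ κ ℂ} (hsum : ∑ k, P k = 1) (φ : ι → κ → ℂ) (w : κ → ℝ)
    (hw : ∀ k, (star (φ k) ⬝ᵥ (P k *ᵥ φ k)).re ≤ ∑ p, w p * (P k p p).re) :
    ∑ k, (star (φ k) ⬝ᵥ (P k *ᵥ φ k)).re ≤ ∑ p, w p := by
  have hdiag (p : κ) : ∑ k, (P k p p).re = 1 := by
    simpa [Matrix.sum_apply, Complex.re_sum] using congrArg (fun M => (M p p).re) hsum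
  calc ∑ k, (star (φ k) ⬝ᵥ (P k *ᵥ φ k)).re
      ≤ ∑ k, ∑ p, w p * (P k p p).re := Finset.sum_le_sum fun k _ => hw k
    _ = ∑ p, w p * ∑ k, (P k p p).re := by rw [Finset.sum_comm]; simp only [Finset.mul_sum]
    _ = ∑ p, w p := by simp only [hdiag, mul_one]

theorem Matrix.posSemidef_single_self_one {m : Type*} [Fintype m] [DecidableEq m] (i : m) :
    (single i i (1 : ℂ)).PosSemidef := by
  rw [← diagonal_single]
  exact PosSemidef.diagonal (Pi.single_nonneg.mpr zero_le_one)

theorem re_star_dotProduct_single_self_one_mulVec {κ : Type*} [Fintype κ] [DecidableEq κ]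
    (v : κ → ℂ) (p : κ) : (star v ⬝ᵥ (single p p 1 *ᵥ v)).re = ‖v p‖ ^ 2 := by
  rw [single_mulVec_eq, one_mul, dotProduct_smul, dotProduct_single, mul_one, smul_eq_mul,
    Pi.star_apply, Complex.star_def, Complex.mul_conj', ← Complex.ofReal_pow, Complex.ofReal_re]

theorem exists_kronecker_povm_re_star_dotProduct_mulVec {ι m n : Type*} [Fintype ι] [Fintype m]
    [Fintype n] [DecidableEq m] [DecidableEq n] (e : ι ≃ m × n) (φ : ι → m × n → ℂ) :
    ∃ P : ι → Matrix (m × n) (m × n) ℂ,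
      (∀ k, ∃ Q R, Q.PosSemidef ∧ R.PosSemidef ∧ P k = Q ⊗ₖ R) ∧ ∑ k, P k = 1 ∧
        ∀ k, (star (φ k) ⬝ᵥ (P k *ᵥ φ k)).re = ‖φ k (e k)‖ ^ 2 := by
  refine ⟨fun k => single (e k) (e k) 1, fun k => ?_, ?_, fun k => ?_⟩
  · refine ⟨single (e k).1 (e k).1 1, single (e k).2 (e k).2 1,
      posSemidef_single_self_one _, posSemidef_single_self_one _, ?_⟩
    rw [single_kronecker_single, one_mul]
  · exact (e.sum_comp fun p => single p p 1).trans sum_single_one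
  · exact re_star_dotProduct_single_self_one_mulVec (φ k) (e k)

theorem mul_le_max_sq {x y u v : ℝ} (hxy : x ^ 2 + y ^ 2 = 1) (huv : u ^ 2 + v ^ 2 = 1) :
    x * y ≤ max (u ^ 2) (v ^ 2) := by
  have h₁ : x * y ≤ 1 / 2 := by nlinarith [sq_nonneg (x - y)]
  have h₂ : 1 / 2 ≤ max (u ^ 2) (v ^ 2) := by
    linarith [le_max_left (u ^ 2) (v ^ 2), le_max_right (u ^ 2) (v ^ 2)]
  linarith

section TwoQubit

variable (α β γ δ : ℂ)

theorem twoQubitBasis_zero :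
    twoQubitBasis α β γ δ 0 = Pi.single (0, 0) α + Pi.single (1, 1) (star β) := by
  ext ⟨i, j⟩; fin_cases i <;> fin_cases j <;> simp [twoQubitBasis]

theorem twoQubitBasis_one :
    twoQubitBasis α β γ δ 1 = Pi.single (0, 0) β + Pi.single (1, 1) (-star α) := by
  ext ⟨i, j⟩; fin_cases i <;> fin_cases j <;> simp [twoQubitBasis]

theorem twoQubitBasis_two :
    twoQubitBasis α β γ δ 2 = Pi.single (0, 1) γ + Pi.single (1, 0) (star δ) := by
  ext ⟨i, j⟩; fin_cases i <;> fin_cases j <;> simp [twoQubitBasis]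

theorem twoQubitBasis_three :
    twoQubitBasis α β γ δ 3 = Pi.single (0, 1) δ + Pi.single (1, 0) (-star γ) := by
  ext ⟨i, j⟩; fin_cases i <;> fin_cases j <;> simp [twoQubitBasis]

noncomputable def twoQubitDualWeight (p : Fin 2 × Fin 2) : ℝ :=
  if p.1 = p.2 then max (‖α‖ ^ 2) (‖β‖ ^ 2) else max (‖γ‖ ^ 2) (‖δ‖ ^ 2)

theorem sum_twoQubitDualWeight :
    ∑ p, twoQubitDualWeight α β γ δ p =
      2 * (max (‖α‖ ^ 2) (‖β‖ ^ 2) + max (‖γ‖ ^ 2) (‖δ‖ ^ 2)) := by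
  simp only [twoQubitDualWeight, Fintype.sum_prod_type, Fin.sum_univ_two, ↓reduceIte,
    zero_ne_one, one_ne_zero]
  ring

theorem exists_equiv_sum_norm_twoQubitBasis_sq :
    ∃ e : Fin 4 ≃ Fin 2 × Fin 2, ∑ k, ‖twoQubitBasis α β γ δ k (e k)‖ ^ 2 =
      2 * (max (‖α‖ ^ 2) (‖β‖ ^ 2) + max (‖γ‖ ^ 2) (‖δ‖ ^ 2)) := by
  rcases le_total (‖β‖ ^ 2) (‖α‖ ^ 2) with hαβ | hαβ <;>
    rcases le_total (‖δ‖ ^ 2) (‖γ‖ ^ 2) with hγδ | hγδ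
  on_goal 1 => refine ⟨.ofBijective ![(0, 0), (1, 1), (0, 1), (1, 0)] (by decide), ?_⟩
  on_goal 2 => refine ⟨.ofBijective ![(0, 0), (1, 1), (1, 0), (0, 1)] (by decide), ?_⟩
  on_goal 3 => refine ⟨.ofBijective ![(1, 1), (0, 0), (0, 1), (1, 0)] (by decide), ?_⟩
  on_goal 4 => refine ⟨.ofBijective ![(1, 1), (0, 0), (1, 0), (0, 1)] (by decide), ?_⟩
  all_goals
    simp only [twoQubitBasis, Equiv.ofBijective_apply, Fin.sum_univ_four, cons_val_zero,
      cons_val_one, cons_val, Prod.mk.injEq, zero_ne_one, one_ne_zero, and_self, ↓reduceIte,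
      norm_neg, RCLike.norm_conj, sup_of_le_left, sup_of_le_right, hαβ, hγδ]
    ring

variable {α β γ δ}

theorem re_star_twoQubitBasis_dotProduct_mulVec_le (hαβ : ‖α‖ ^ 2 + ‖β‖ ^ 2 = 1)
    (hγδ : ‖γ‖ ^ 2 + ‖δ‖ ^ 2 = 1) {P : Matrix (Fin 2 × Fin 2) (Fin 2 × Fin 2) ℂ}
    (hP : P.PosSemidef) (hT : (ptranspose P).PosSemidef) (k : Fin 4) :
    (star (twoQubitBasis α β γ δ k) ⬝ᵥ (P *ᵥ twoQubitBasis α β γ δ k)).re ≤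
      ∑ p, twoQubitDualWeight α β γ δ p * (P p p).re := by
  have hβα : ‖β‖ ^ 2 + ‖α‖ ^ 2 = 1 := by rw [add_comm, hαβ]
  have hδγ : ‖δ‖ ^ 2 + ‖γ‖ ^ 2 = 1 := by rw [add_comm, hγδ]
  match k with
  | 0 =>
    rw [twoQubitBasis_zero]
    apply re_star_dotProduct_mulVec_single_add_single_le_sum hP hT _ zero_ne_one zero_ne_one <;>
      simp [twoQubitDualWeight, mul_le_max_sq hαβ hγδ]
  | 1 =>
    rw [twoQubitBasis_one]
    apply re_star_dotProduct_mulVec_single_add_single_le_sum hP hT _ zero_ne_one zero_ne_one <;>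
      simp [twoQubitDualWeight, mul_le_max_sq hβα hγδ]
  | 2 =>
    rw [twoQubitBasis_two]
    apply re_star_dotProduct_mulVec_single_add_single_le_sum hP hT _ zero_ne_one one_ne_zero <;>
      simp [twoQubitDualWeight, mul_le_max_sq hγδ hαβ]
  | 3 =>
    rw [twoQubitBasis_three]
    apply re_star_dotProduct_mulVec_single_add_single_le_sum hP hT _ zero_ne_one one_ne_zero <;>
      simp [twoQubitDualWeight, mul_le_max_sq hδγ hαβ]

end TwoQubit

/-- For every two-qubit orthonormal LDOI basis, the value
`V = (1/2)(max{|α|², |β|²} + max{|γ|², |δ|²})` is an upper bound on the success probability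
of every PPT POVM for the uniform ensemble, and is exactly attained by a POVM whose elements
are Kronecker products of positive semidefinite `2 × 2` matrices. -/
theorem two_qubit_ldoi_dist (α β γ δ : ℂ)
    (hαβ : ‖α‖ ^ 2 + ‖β‖ ^ 2 = 1)
    (hγδ : ‖γ‖ ^ 2 + ‖δ‖ ^ 2 = 1)
    (V : ℝ)
    (hV : V = (1 / 2) * (max (‖α‖ ^ 2) (‖β‖ ^ 2) +
      max (‖γ‖ ^ 2) (‖δ‖ ^ 2))) :
    (∀ P : Fin 4 → Matrix (Fin 2 × Fin 2) (Fin 2 × Fin 2) ℂ,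
      (∀ k, (P k).PosSemidef) → (∑ k, P k = 1) →
      (∀ k, (ptranspose (P k)).PosSemidef) →
      (1 / 4 : ℝ) *
          ∑ k, (star (twoQubitBasis α β γ δ k) ⬝ᵥ (P k *ᵥ twoQubitBasis α β γ δ k)).re ≤ V) ∧
    (∃ P : Fin 4 → Matrix (Fin 2 × Fin 2) (Fin 2 × Fin 2) ℂ,
      (∀ k, ∃ Q R : Matrix (Fin 2) (Fin 2) ℂ,
        Q.PosSemidef ∧ R.PosSemidef ∧ P k = Q ⊗ₖ R) ∧
      (∑ k, P k = 1) ∧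
      (1 / 4 : ℝ) *
          ∑ k, (star (twoQubitBasis α β γ δ k) ⬝ᵥ (P k *ᵥ twoQubitBasis α β γ δ k)).re = V) := by
  constructor
  · intro P hP hsum hT
    have hle := sum_re_star_dotProduct_mulVec_le_sum hsum (twoQubitBasis α β γ δ)
      (twoQubitDualWeight α β γ δ)
      fun k => re_star_twoQubitBasis_dotProduct_mulVec_le hαβ hγδ (hP k) (hT k) k
    rw [sum_twoQubitDualWeight] at hle
    rw [hV]
    linarith
  · obtain ⟨e, he⟩ := exists_equiv_sum_norm_twoQubitBasis_sq α β γ δ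
    obtain ⟨P, hprod, hsum, hval⟩ :=
      exists_kronecker_povm_re_star_dotProduct_mulVec e (twoQubitBasis α β γ δ)
    refine ⟨P, hprod, hsum, ?_⟩
    rw [Finset.sum_congr rfl fun k _ => hval k, he, hV]
    ring
end

section
/- Let n = 2 and let α, β, γ, δ ∈ ℂ satisfy |α|² + |β|² = 1 and |γ|² + |δ|² = 1. Define φ₁ = α·e₁⊗e₁ + conj(β)·e₂⊗e₂, φ₂ = β·e₁⊗e₁ − conj(α)·e₂⊗e₂, φ₃ = γ·e₁⊗e₂ + conj(δ)·e₂⊗e₁, φ₄ = δ·e₁⊗e₂ − conj(γ)·e₂⊗e₁. Then there exists a POVM (P_1, P_2, P_3, P_4) whose elements are Kronecker products of positive semidefinite 2×2 matrices with (1/4) ∑_{k=1}^4 ⟨φ_k, P_k φ_k⟩ ≥ 1/2; moreover, if it is not the case that |α|² = |β|² = |γ|² = |δ|² = 1/2, then such a POVM exists with (1/4) ∑_{k=1}^4 ⟨φ_k, P_k φ_k⟩ > 1/2. In particular, among all two-qubit orthonormal LDOI bases, the Bell basis minimizes this optimal success probability. -/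
/-!
Measure both qubits in the computational basis. The vectors `φ₁, φ₂` are supported on the
diagonal `{(0,0), (1,1)}` and `φ₃, φ₄` on the antidiagonal, so guessing `φ₁` on outcome `(x, x)`,
`φ₂` on `(x+1, x+1)`, `φ₃` on `(y, y+1)` and `φ₄` on `(y+1, y)` succeeds with probability
`(a x + c y) / 2`, where `a = (|α|², |β|²)` and `c = (|γ|², |δ|²)`. Choosing the larger entries
gives `(max |α|² |β|² + max |γ|² |δ|²) / 2`, and a maximum of two numbers summing to `1` is at
least `1/2`, with equality only when both are `1/2`.
-/

open Matrix Kronecker BigOperators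
open scoped ComplexOrder

section ProductPOVM

variable {ι m n : Type*} [DecidableEq m] [DecidableEq n]

def IsProductPOVM [Fintype ι] (P : ι → Matrix (m × n) (m × n) ℂ) : Prop :=
  (∀ k, ∃ (Q : Matrix m m ℂ) (R : Matrix n n ℂ), Q.PosSemidef ∧ R.PosSemidef ∧ P k = Q ⊗ₖ R) ∧
    ∑ k, P k = 1

lemma posSemidef_diagonal_single_one (i : m) : (diagonal (Pi.single i (1 : ℂ))).PosSemidef :=
  posSemidef_diagonal_iff.mpr <| Pi.single_nonneg.mpr zero_le_one

lemma diagonal_single_one_kronecker (i : m) (j : n) :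
    diagonal (Pi.single i (1 : ℂ)) ⊗ₖ diagonal (Pi.single j 1) = diagonal (Pi.single (i, j) 1) := by
  rw [diagonal_kronecker_diagonal]
  congr 1
  ext ⟨a, b⟩
  by_cases ha : a = i <;> by_cases hb : b = j <;> simp [ha, hb]

lemma re_star_dotProduct_diagonal_single_one_mulVec [Fintype m] (v : m → ℂ) (p : m) :
    (star v ⬝ᵥ (diagonal (Pi.single p 1) *ᵥ v)).re = ‖v p‖ ^ 2 := by
  have : diagonal (Pi.single p 1) *ᵥ v = Pi.single p (v p) := by
    ext q
    by_cases h : q = p <;> simp [mulVec_diagonal, h]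
  rw [this, dotProduct_single, Pi.star_apply, Complex.star_def, Complex.conj_mul']
  norm_cast

def productBasisPOVM (e : ι → m × n) : ι → Matrix (m × n) (m × n) ℂ :=
  fun k => diagonal (Pi.single (e k).1 1) ⊗ₖ diagonal (Pi.single (e k).2 1)

lemma productBasisPOVM_apply (e : ι → m × n) (k : ι) :
    productBasisPOVM e k = diagonal (Pi.single (e k) 1) :=
  diagonal_single_one_kronecker _ _

lemma isProductPOVM_productBasisPOVM [Fintype ι] [Fintype m] [Fintype n] {e : ι → m × n}
    (he : e.Bijective) : IsProductPOVM (productBasisPOVM e) := by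
  refine ⟨fun k => ⟨_, _, posSemidef_diagonal_single_one _, posSemidef_diagonal_single_one _, rfl⟩,
    ?_⟩
  calc ∑ k, productBasisPOVM e k
      = diagonalAddMonoidHom _ _ (∑ k, Pi.single (e k) 1) := by
        simp only [productBasisPOVM_apply, map_sum]; rfl
    _ = 1 := by
        rw [he.sum_comp (fun p => Pi.single p 1), Finset.univ_sum_single (fun _ => 1)]
        exact diagonal_one

lemma sum_re_star_dotProduct_productBasisPOVM_mulVec [Fintype ι] [Fintype m] [Fintype n]
    (φ : ι → m × n → ℂ) (e : ι → m × n) :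
    ∑ k, (star (φ k) ⬝ᵥ (productBasisPOVM e k *ᵥ φ k)).re = ∑ k, ‖φ k (e k)‖ ^ 2 := by
  simp only [productBasisPOVM_apply, re_star_dotProduct_diagonal_single_one_mulVec]

end ProductPOVM

def ldoiOutcome (x y : Fin 2) : Fin 4 → Fin 2 × Fin 2 :=
  ![(x, x), (x + 1, x + 1), (y, y + 1), (y + 1, y)]

lemma bijective_ldoiOutcome (x y : Fin 2) : (ldoiOutcome x y).Bijective := by
  revert x y
  decide

lemma sum_norm_sq_twoQubitBasis_ldoiOutcome (α β γ δ : ℂ) (x y : Fin 2) :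
    ∑ k, ‖twoQubitBasis α β γ δ k (ldoiOutcome x y k)‖ ^ 2
      = 2 * (![‖α‖ ^ 2, ‖β‖ ^ 2] x + ![‖γ‖ ^ 2, ‖δ‖ ^ 2] y) := by
  fin_cases x <;> fin_cases y <;>
    simp [Fin.sum_univ_four, twoQubitBasis, ldoiOutcome] <;> ring

lemma exists_vecCons_eq_max (a b : ℝ) : ∃ x : Fin 2, ![a, b] x = max a b := by
  rcases le_total a b with h | h
  · exact ⟨1, by simp [max_eq_right h]⟩
  · exact ⟨0, by simp [max_eq_left h]⟩

lemma exists_isProductPOVM_success_eq_max (α β γ δ : ℂ) :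
    ∃ P : Fin 4 → Matrix (Fin 2 × Fin 2) (Fin 2 × Fin 2) ℂ, IsProductPOVM P ∧
      (1 / 4 : ℝ) * ∑ k, (star (twoQubitBasis α β γ δ k) ⬝ᵥ (P k *ᵥ twoQubitBasis α β γ δ k)).re
        = (max (‖α‖ ^ 2) (‖β‖ ^ 2) + max (‖γ‖ ^ 2) (‖δ‖ ^ 2)) / 2 := by
  obtain ⟨x, hx⟩ := exists_vecCons_eq_max (‖α‖ ^ 2) (‖β‖ ^ 2)
  obtain ⟨y, hy⟩ := exists_vecCons_eq_max (‖γ‖ ^ 2) (‖δ‖ ^ 2)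
  refine ⟨_, isProductPOVM_productBasisPOVM (bijective_ldoiOutcome x y), ?_⟩
  rw [sum_re_star_dotProduct_productBasisPOVM_mulVec, sum_norm_sq_twoQubitBasis_ldoiOutcome,
    hx, hy]
  ring

lemma half_le_max_of_add_eq_one {a b : ℝ} (h : a + b = 1) : 1 / 2 ≤ max a b := by
  rcases le_total a b with hab | hab <;> simp [hab] <;> linarith

lemma half_lt_max_of_add_eq_one {a b : ℝ} (h : a + b = 1) (ha : a ≠ 1 / 2) : 1 / 2 < max a b := by
  rcases ha.lt_or_gt with ha | ha
  · exact lt_max_of_lt_right (by linarith)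
  · exact lt_max_of_lt_left ha

/-- For every two-qubit orthonormal LDOI basis there is a product POVM with success probability
at least `1/2`; when the basis is not the Bell basis (i.e. not all of
`|α|², |β|², |γ|², |δ|²` equal `1/2`) there is one with success probability strictly greater
than `1/2`. In particular, the Bell basis minimizes the optimal success probability among
two-qubit orthonormal LDOI bases. -/
theorem bell_minimizes (α β γ δ : ℂ)
    (hαβ : ‖α‖ ^ 2 + ‖β‖ ^ 2 = 1)
    (hγδ : ‖γ‖ ^ 2 + ‖δ‖ ^ 2 = 1) :
    (∃ P : Fin 4 → Matrix (Fin 2 × Fin 2) (Fin 2 × Fin 2) ℂ,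
      (∀ k, ∃ Q R : Matrix (Fin 2) (Fin 2) ℂ,
        Q.PosSemidef ∧ R.PosSemidef ∧ P k = Q ⊗ₖ R) ∧
      (∑ k, P k = 1) ∧
      (1 / 2 : ℝ) ≤ (1 / 4 : ℝ) *
          ∑ k, (star (twoQubitBasis α β γ δ k) ⬝ᵥ (P k *ᵥ twoQubitBasis α β γ δ k)).re) ∧
    (¬(‖α‖ ^ 2 = 1 / 2 ∧ ‖β‖ ^ 2 = 1 / 2 ∧
        ‖γ‖ ^ 2 = 1 / 2 ∧ ‖δ‖ ^ 2 = 1 / 2) →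
      ∃ P : Fin 4 → Matrix (Fin 2 × Fin 2) (Fin 2 × Fin 2) ℂ,
        (∀ k, ∃ Q R : Matrix (Fin 2) (Fin 2) ℂ,
          Q.PosSemidef ∧ R.PosSemidef ∧ P k = Q ⊗ₖ R) ∧
        (∑ k, P k = 1) ∧
        (1 / 2 : ℝ) < (1 / 4 : ℝ) *
            ∑ k, (star (twoQubitBasis α β γ δ k) ⬝ᵥ (P k *ᵥ twoQubitBasis α β γ δ k)).re) := by
  obtain ⟨P, ⟨hprod, hsum⟩, hsucc⟩ := exists_isProductPOVM_success_eq_max α β γ δ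
  have hαβ_max := half_le_max_of_add_eq_one hαβ
  have hγδ_max := half_le_max_of_add_eq_one hγδ
  refine ⟨⟨P, hprod, hsum, by rw [hsucc]; linarith⟩, fun hnotBell => ⟨P, hprod, hsum, ?_⟩⟩
  rw [hsucc]
  by_cases hα : ‖α‖ ^ 2 = 1 / 2
  · have hγ : ‖γ‖ ^ 2 ≠ 1 / 2 := fun hγ => hnotBell ⟨hα, by linarith, hγ, by linarith⟩
    linarith [half_lt_max_of_add_eq_one hγδ hγ]
  · linarith [half_lt_max_of_add_eq_one hαβ hα]
end

section
/- For every orthonormal LDOI basis of ℂⁿ⊗ℂⁿ, there exists a POVM (P_{i,j})_{1≤i,j≤n} whose elements are Kronecker products of positive semidefinite matrices (hence separable) such that its success probability for the uniform ensemble satisfies (1/n²) ∑_{i,j=1}^n ⟨φ_{i,j}, P_{i,j} φ_{i,j}⟩ ≥ (n² − n + 2)/(2n²) = 1/2 − (n−2)/(2n²). In particular, since (n² − n + 2)/(2n²) ≥ 7/16 for all integers n ≥ 2, the success probability is at least 7/16 in every dimension. -/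
open Matrix Kronecker BigOperators
open scoped ComplexOrder

/-! Both parties measure in the computational basis and the outcome `p` is read as the guess
`σ⁻¹ p` for a permutation `σ` of index pairs, so `φ_{i,j}` is identified with probability
`|φ_{i,j}(σ (i, j))|²`. For `i ≠ j` the vectors `φ_{i,j}`, `φ_{j,i}` are supported on
`{(i,j), (j,i)}` with complementary weights `|a_{i,j}|²`, `|a_{j,i}|²`, so keeping or swapping
the two outcomes of each pair `{i, j}` gives every off-diagonal vector at least `1/2`. The
diagonal vectors are sent along a cyclic shift, `(i, i) ↦ (i + t, i + t)`; since the rows of `U`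
are unit vectors, the `n` shifts capture `n` in total, so one of them captures at least `1`.
Hence the success probability is at least `(1 + n(n-1)/2) / n²`. -/

namespace Matrix

variable {𝕜 κ : Type*} [RCLike 𝕜] [DecidableEq κ]

theorem posSemidef_single_one (p : κ) : (single p p (1 : 𝕜)).PosSemidef := by
  rw [← diagonal_single]
  exact PosSemidef.diagonal (Pi.single_nonneg.mpr zero_le_one)

variable [Fintype κ]

theorem re_star_dotProduct_single_one_mulVec (p : κ) (v : κ → 𝕜) :
    RCLike.re (star v ⬝ᵥ (single p p (1 : 𝕜) *ᵥ v)) = ‖v p‖ ^ 2 := by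
  rw [single_mulVec_eq, one_mul, dotProduct_smul, dotProduct_single_one, smul_eq_mul,
    Pi.star_apply, RCLike.star_def, RCLike.mul_conj]
  norm_cast

theorem sum_norm_sq_row_eq_one {U : Matrix κ κ 𝕜} (hU : Uᴴ * U = 1) (i : κ) :
    ∑ k, ‖U i k‖ ^ 2 = 1 := by
  have hii := congr($(mul_eq_one_comm.mp hU) i i)
  simp only [mul_apply, conjTranspose_apply, one_apply_eq, RCLike.star_def,
    RCLike.mul_conj] at hii
  exact_mod_cast hii

theorem sum_perm_single_one (σ : Equiv.Perm κ) : ∑ x, single (σ x) (σ x) (1 : 𝕜) = 1 :=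
  (Equiv.sum_comp σ fun x => single x x (1 : 𝕜)).trans sum_single_one

end Matrix

section PairPerm

variable {G : Type*}

def diagShift [AddGroup G] [DecidableEq G] (t : G) : Equiv.Perm (G × G) where
  toFun x := if x.1 = x.2 then (x.1 + t, x.1 + t) else x
  invFun x := if x.1 = x.2 then (x.1 - t, x.1 - t) else x
  left_inv x := by
    by_cases h : x.1 = x.2
    · simp [h, Prod.ext_iff]
    · simp [h]
  right_inv x := by
    by_cases h : x.1 = x.2
    · simp [h, Prod.ext_iff]
    · simp [h]

theorem diagShift_apply_self [AddGroup G] [DecidableEq G] (t i : G) :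
    diagShift t (i, i) = (i + t, i + t) := by
  simp [diagShift]

theorem diagShift_apply_of_ne [AddGroup G] [DecidableEq G] (t : G) {i j : G} (h : i ≠ j) :
    diagShift t (i, j) = (i, j) := by
  simp [diagShift, h]

variable (s : G → G → Prop) [DecidableRel s]

def swapIf (hs : ∀ i j, s i j → s j i) : Equiv.Perm (G × G) :=
  Function.Involutive.toPerm (fun x => if s x.1 x.2 then x.swap else x) fun x => by
    by_cases h : s x.1 x.2
    · simp [h, hs _ _ h]
    · simp [h]

theorem swapIf_apply (hs : ∀ i j, s i j → s j i) (i j : G) :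
    swapIf s hs (i, j) = if s i j then (j, i) else (i, j) :=
  rfl

theorem swapIf_apply_self (hs : ∀ i j, s i j → s j i) (i : G) : swapIf s hs (i, i) = (i, i) := by
  rw [swapIf_apply]; split_ifs <;> rfl

end PairPerm

theorem exists_one_le_sum_norm_sq_shift {𝕜 G : Type*} [RCLike 𝕜] [AddGroup G] [Fintype G]
    [DecidableEq G] [Nonempty G] {U : Matrix G G 𝕜} (hU : Uᴴ * U = 1) :
    ∃ t, 1 ≤ ∑ i, ‖U i (i + t)‖ ^ 2 := by
  have htotal : ∑ t, ∑ i, ‖U i (i + t)‖ ^ 2 = ∑ _t : G, (1 : ℝ) := by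
    rw [Finset.sum_comm]
    refine Finset.sum_congr rfl fun i _ => ?_
    rw [← Matrix.sum_norm_sq_row_eq_one hU i]
    exact Equiv.sum_comp (Equiv.addLeft i) fun k => ‖U i k‖ ^ 2
  obtain ⟨t, -, ht⟩ := Finset.exists_le_of_sum_le Finset.univ_nonempty htotal.ge
  exact ⟨t, ht⟩

theorem le_sum_sum_of_le_sum_diag {ι : Type*} [Fintype ι] [DecidableEq ι] {f : ι → ι → ℝ}
    {a b : ℝ} (hdiag : a ≤ ∑ i, f i i) (hoff : ∀ i j, i ≠ j → b ≤ f i j) :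
    a + Fintype.card ι * (Fintype.card ι - 1) * b ≤ ∑ i, ∑ j, f i j := by
  have hrow : ∀ i, f i i + (Fintype.card ι - 1) * b ≤ ∑ j, f i j := by
    intro i
    have hcard : ((Finset.univ.erase i).card : ℝ) = Fintype.card ι - 1 := by
      rw [Finset.card_erase_of_mem (Finset.mem_univ i), Finset.card_univ,
        Nat.cast_pred (Fintype.card_pos_iff.mpr ⟨i⟩)]
    have hsum := Finset.card_nsmul_le_sum (Finset.univ.erase i) (f i) b
      fun j hj => hoff i j (Finset.ne_of_mem_erase hj).symm
    rw [nsmul_eq_mul, hcard] at hsum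
    rw [← Finset.add_sum_erase _ _ (Finset.mem_univ i)]
    gcongr
  calc a + Fintype.card ι * (Fintype.card ι - 1) * b
      ≤ ∑ i, f i i + Fintype.card ι • ((Fintype.card ι - 1) * b) := by
        rw [nsmul_eq_mul]; linarith
    _ = ∑ i, (f i i + (Fintype.card ι - 1) * b) := by
        rw [Finset.sum_add_distrib, Finset.sum_const, Finset.card_univ]
    _ ≤ ∑ i, ∑ j, f i j := Finset.sum_le_sum fun i _ => hrow i

section LDOI

variable {n : ℕ} (U A : Matrix (Fin n) (Fin n) ℂ)

theorem ldoiBasis_self_apply (i k : Fin n) : ldoiBasis U A i i (k, k) = U i k := by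
  simp [ldoiBasis]

theorem norm_ldoiBasis_apply_self {i j : Fin n} (h : i ≠ j) :
    ‖ldoiBasis U A i j (i, j)‖ = ‖A (min i j) (max i j)‖ := by
  rcases h.lt_or_gt with h' | h'
  · simp [ldoiBasis, h, h', min_eq_left h'.le, max_eq_right h'.le]
  · simp [ldoiBasis, h, h'.not_gt, min_eq_right h'.le, max_eq_left h'.le, Prod.ext_iff, h.symm]

theorem norm_ldoiBasis_apply_swap {i j : Fin n} (h : i ≠ j) :
    ‖ldoiBasis U A i j (j, i)‖ = ‖A (max i j) (min i j)‖ := by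
  rcases h.lt_or_gt with h' | h'
  · simp [ldoiBasis, h, h', min_eq_left h'.le, max_eq_right h'.le, Prod.ext_iff, h.symm]
  · simp [ldoiBasis, h, h'.not_gt, min_eq_right h'.le, max_eq_left h'.le]

theorem exists_perm_le_sum_norm_sq_ldoiBasis [NeZero n] (hU : Uᴴ * U = 1)
    (hA : ∀ i j : Fin n, i ≠ j → ‖A i j‖ ^ 2 + ‖A j i‖ ^ 2 = 1) :
    ∃ σ : Equiv.Perm (Fin n × Fin n),
      1 + n * (n - 1) * (1 / 2 : ℝ) ≤ ∑ i, ∑ j, ‖ldoiBasis U A i j (σ (i, j))‖ ^ 2 := by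
  obtain ⟨t, ht⟩ := exists_one_le_sum_norm_sq_shift hU
  let s : Fin n → Fin n → Prop := fun i j => 2 * ‖A (min i j) (max i j)‖ ^ 2 < 1
  have hs : ∀ i j, s i j → s j i := fun i j => by simp only [s, min_comm, max_comm, imp_self]
  refine ⟨(diagShift t).trans (swapIf s hs), ?_⟩
  calc 1 + n * (n - 1) * (1 / 2 : ℝ)
      = 1 + Fintype.card (Fin n) * (Fintype.card (Fin n) - 1) * (1 / 2 : ℝ) := by
        rw [Fintype.card_fin]
    _ ≤ _ := le_sum_sum_of_le_sum_diag ?_ ?_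
  · simpa [diagShift_apply_self, swapIf_apply_self, ldoiBasis_self_apply] using ht
  · intro i j hij
    simp only [Equiv.trans_apply, diagShift_apply_of_ne t hij, swapIf_apply]
    split_ifs with h
    · have := hA (min i j) (max i j) (min_lt_max.mpr hij).ne
      rw [norm_ldoiBasis_apply_swap _ _ hij]
      linarith
    · rw [norm_ldoiBasis_apply_self _ _ hij]
      linarith [not_lt.mp h]

end LDOI

/-- Universal LOCC lower bound: for every orthonormal LDOI basis there is a POVM whose elements
are Kronecker products of positive semidefinite matrices (hence separable) with success
probability at least `(n² − n + 2)/(2n²) = 1/2 − (n−2)/(2n²)` for the uniform ensemble; and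
this quantity is at least `7/16` for every `n ≥ 2`. -/
theorem universal_locc_lower_bound (n : ℕ) (hn : 2 ≤ n) (U A : Matrix (Fin n) (Fin n) ℂ)
    (hU : Uᴴ * U = 1)
    (hA : ∀ i j : Fin n, i ≠ j → ‖A i j‖ ^ 2 + ‖A j i‖ ^ 2 = 1) :
    (∃ P : Fin n → Fin n → Matrix (Fin n × Fin n) (Fin n × Fin n) ℂ,
      (∀ i j, ∃ Q R : Matrix (Fin n) (Fin n) ℂ,
        Q.PosSemidef ∧ R.PosSemidef ∧ P i j = Q ⊗ₖ R) ∧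
      (∑ i, ∑ j, P i j = 1) ∧
      ((n : ℝ) ^ 2 - n + 2) / (2 * (n : ℝ) ^ 2) ≤
        (1 / (n : ℝ) ^ 2) *
          ∑ i, ∑ j, (star (ldoiBasis U A i j) ⬝ᵥ (P i j *ᵥ ldoiBasis U A i j)).re) ∧
    ((n : ℝ) ^ 2 - n + 2) / (2 * (n : ℝ) ^ 2) = 1 / 2 - ((n : ℝ) - 2) / (2 * (n : ℝ) ^ 2) ∧
    (7 / 16 : ℝ) ≤ ((n : ℝ) ^ 2 - n + 2) / (2 * (n : ℝ) ^ 2) := by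
  have : NeZero n := ⟨by omega⟩
  have hn' : (2 : ℝ) ≤ n := by exact_mod_cast hn
  obtain ⟨σ, hσ⟩ := exists_perm_le_sum_norm_sq_ldoiBasis U A hU hA
  refine ⟨⟨fun i j => single (σ (i, j)).1 (σ (i, j)).1 1 ⊗ₖ single (σ (i, j)).2 (σ (i, j)).2 1,
    fun i j => ⟨_, _, posSemidef_single_one _, posSemidef_single_one _, rfl⟩, ?_, ?_⟩, ?_, ?_⟩
  · simp only [single_kronecker_single, one_mul, Prod.mk.eta]
    rw [← Fintype.sum_prod_type' (f := fun i j => single (σ (i, j)) (σ (i, j)) (1 : ℂ))]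
    exact sum_perm_single_one σ
  · simp only [single_kronecker_single, one_mul, Prod.mk.eta]
    simp only [← RCLike.re_to_complex, re_star_dotProduct_single_one_mulVec]
    calc ((n : ℝ) ^ 2 - n + 2) / (2 * (n : ℝ) ^ 2)
        = 1 / (n : ℝ) ^ 2 * (1 + n * (n - 1) * (1 / 2)) := by
          field_simp; ring
      _ ≤ _ := by gcongr
  · field_simp
    ring
  · rw [div_le_div_iff₀ (by norm_num) (by positivity)]
    nlinarith [sq_nonneg ((n : ℝ) - 4)]
end

section
/- For every integer n ≥ 2 and every n×n unitary matrix U = (u_{i,j}), we have ∑_{i=1}^n max{1/2, max_{1≤k≤n} |u_{k,i}|²} − max_{σ ∈ S_n} ∑_{i=1}^n |u_{i,σ(i)}|² ≤ (n−2)/2, where the maximum is over all permutations σ of {1,…,n}. Consequently, for any orthonormal LDOI basis, the PPT upper bound (1/n²)·(∑_{i≠j} max{|a_{i,j}|²,|a_{j,i}|²} + ∑_i max{1/2, max_k |u_{k,i}|²}) exceeds the product-measurement lower bound (1/n²)·(∑_{i≠j} max{|a_{i,j}|²,|a_{j,i}|²} + max_σ ∑_i |u_{i,σ(i)}|²) by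 at most (n−2)/(2n²). -/
/-!
The matrix `P = (|u_{ij}|²)` of a unitary `U` is doubly stochastic. A row of `P` can exceed `1/2`
in at most one column, so the maximising rows of the columns whose maximum exceeds `1/2` are
distinct. If there are at least two such columns, a permutation through these rows already gives
the bound. Otherwise, by Birkhoff's theorem a linear functional of `P` is maximised over the
doubly stochastic matrices at a permutation matrix, so any doubly stochastic `D` yields a
permutation sum of at least `∑ D_{ij} p_{ij}`: the uniform matrix gives `1`, and the uniform
matrix on the complement of row `k` and column `j`, plus a `1` at `(k, j)`, gives
`p_{kj} + (n - 2 + p_{kj}) / (n - 1) ≥ p_{kj} + 1/2` when `p_{kj} > 1/2`.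
-/

open Matrix Finset

theorem Finset.sum_max_eq_sum_filter_add {α : Type*} (s : Finset α) (c : ℝ) (f : α → ℝ) :
    ∑ a ∈ s, max c (f a) = ∑ a ∈ s with c < f a, f a + #{a ∈ s | ¬ c < f a} * c := by
  rw [← sum_filter_add_sum_filter_not s (fun a => c < f a)]
  congr 1
  · exact sum_congr rfl fun a ha => max_eq_right (mem_filter.mp ha).2.le
  · rw [sum_congr rfl fun a ha => max_eq_left (not_lt.mp (mem_filter.mp ha).2), sum_const,
      nsmul_eq_mul]

namespace Matrix

variable {ι : Type*} [Fintype ι] [DecidableEq ι]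

theorem normSq_mem_doublyStochastic {𝕜 : Type*} [RCLike 𝕜] {U : Matrix ι ι 𝕜}
    (hU : U ∈ unitaryGroup ι 𝕜) : of (fun i j => ‖U i j‖ ^ 2) ∈ doublyStochastic ℝ ι := by
  refine mem_doublyStochastic_iff_sum.mpr
    ⟨fun i j => sq_nonneg ‖U i j‖, fun i => ?_, fun j => ?_⟩
  · have h := congrFun (congrFun (mem_unitaryGroup_iff.mp hU) i) i
    simp only [mul_apply, star_apply, RCLike.star_def, RCLike.mul_conj, one_apply_eq] at h
    exact_mod_cast h
  · have h := congrFun (congrFun (mem_unitaryGroup_iff'.mp hU) j) j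
    simp only [mul_apply, star_apply, RCLike.star_def, RCLike.conj_mul, one_apply_eq] at h
    exact_mod_cast h

theorem exists_perm_sum_mul_le {D : Matrix ι ι ℝ} (hD : D ∈ doublyStochastic ℝ ι)
    (M : Matrix ι ι ℝ) : ∃ σ : Equiv.Perm ι, ∑ i, ∑ j, D i j * M i j ≤ ∑ i, M i (σ i) := by
  have hL : ConvexOn ℝ Set.univ fun X : Matrix ι ι ℝ => ∑ i, ∑ j, X i j * M i j :=
    ⟨convex_univ, fun X _ Y _ a b _ _ _ => le_of_eq <| by
      simp only [add_apply, smul_apply, smul_eq_mul, add_mul, mul_assoc, sum_add_distrib,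
        mul_sum]⟩
  rw [← SetLike.mem_coe, doublyStochastic_eq_convexHull_permMatrix] at hD
  obtain ⟨_, ⟨σ, rfl⟩, hσ⟩ := hL.exists_ge_of_mem_convexHull (Set.subset_univ _) hD
  refine ⟨σ, hσ.trans_eq ?_⟩
  simp [PEquiv.toMatrix_apply, Equiv.toPEquiv_apply]

theorem exists_perm_one_le_sum [Nonempty ι] {M : Matrix ι ι ℝ}
    (hM : M ∈ doublyStochastic ℝ ι) : ∃ σ : Equiv.Perm ι, 1 ≤ ∑ i, M i (σ i) := by
  have hN : (Fintype.card ι : ℝ) ≠ 0 := by positivity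
  have hJ : of (fun _ _ => (Fintype.card ι : ℝ)⁻¹) ∈ doublyStochastic ℝ ι :=
    mem_doublyStochastic_iff_sum.mpr ⟨fun _ _ => by simp only [of_apply]; positivity,
      fun _ => by simp [hN], fun _ => by simp [hN]⟩
  obtain ⟨σ, hσ⟩ := exists_perm_sum_mul_le hJ M
  refine ⟨σ, le_of_eq_of_le ?_ hσ⟩
  simp [← mul_sum, sum_row_of_mem_doublyStochastic hM, hN]

theorem exists_perm_apply_add_le_sum {M : Matrix ι ι ℝ} (hM : M ∈ doublyStochastic ℝ ι)
    (hι : 1 < Fintype.card ι) (k j : ι) :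
    ∃ σ : Equiv.Perm ι,
      M k j + (Fintype.card ι - 2 + M k j) / (Fintype.card ι - 1) ≤ ∑ i, M i (σ i) := by
  have hN : (0 : ℝ) < Fintype.card ι - 1 := by
    rw [sub_pos]; exact_mod_cast hι
  set c : ℝ := (Fintype.card ι - 1)⁻¹
  have hc : c * (Fintype.card ι - 1) = 1 := inv_mul_cancel₀ hN.ne'
  -- the average of the permutation matrices sending `k` to `j`
  let D : Matrix ι ι ℝ := of fun a b =>
    (if a = k then 1 else 0) * (if b = j then 1 else 0) +
      c * ((1 - if a = k then 1 else 0) * (1 - if b = j then 1 else 0))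
  have hD : D ∈ doublyStochastic ℝ ι := by
    refine mem_doublyStochastic_iff_sum.mpr ⟨fun a b => ?_, fun a => ?_, fun b => ?_⟩
    · have : 0 ≤ c := inv_nonneg.mpr hN.le
      simp only [D, of_apply]
      split_ifs <;> norm_num [this]
    · simp only [D, of_apply]
      split_ifs <;> simp only [mul_ite, mul_one, mul_zero, sub_self, sub_zero, mul_sub, ite_self,
        add_zero, zero_add, sum_sub_distrib, sum_const, card_univ, nsmul_eq_mul, sum_ite_eq',
        mem_univ, ↓reduceIte]
      linear_combination hc
    · simp only [D, of_apply]
      split_ifs <;> simp only [mul_ite, mul_one, mul_zero, sub_self, sub_zero, mul_sub, add_zero,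
        zero_add, sum_sub_distrib, sum_const, card_univ, nsmul_eq_mul, sum_ite_eq', mem_univ,
        ↓reduceIte]
      linear_combination hc
  obtain ⟨σ, hσ⟩ := exists_perm_sum_mul_le hD M
  refine ⟨σ, le_of_eq_of_le ?_ hσ⟩
  simp only [D, of_apply, add_mul, sub_mul, mul_sub, ite_mul, mul_ite, one_mul, zero_mul, mul_one,
    mul_zero, sum_add_distrib, sum_sub_distrib, ← mul_sum, sum_ite_eq', sum_ite_irrel,
    sum_const_zero, sum_const, card_univ, nsmul_eq_mul, mem_univ, ↓reduceIte,
    sum_row_of_mem_doublyStochastic hM, sum_col_of_mem_doublyStochastic hM, div_eq_mul_inv]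
  ring

theorem exists_perm_sum_le_sum_of_injOn {M : Matrix ι ι ℝ} (hM : ∀ i j, 0 ≤ M i j)
    {s : Finset ι} {r : ι → ι} (hr : Set.InjOn r s) :
    ∃ σ : Equiv.Perm ι, ∑ j ∈ s, M (r j) j ≤ ∑ i, M i (σ i) := by
  obtain ⟨τ, hτ⟩ := exists_equiv_extend_of_card_eq (t := univ) (by simp) (by simp) hr
  let ρ : Equiv.Perm ι := τ.trans (Equiv.subtypeUnivEquiv mem_univ)
  refine ⟨ρ.symm, ?_⟩
  rw [← Equiv.sum_comp ρ]
  simp only [Equiv.symm_apply_apply]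
  calc ∑ j ∈ s, M (r j) j = ∑ j ∈ s, M (ρ j) j := sum_congr rfl fun j hj => by simp [ρ, hτ j hj]
    _ ≤ ∑ j, M (ρ j) j := sum_le_univ_sum_of_nonneg fun j => hM _ _

theorem sum_max_half_ciSup_le {M : Matrix ι ι ℝ} (hM : M ∈ doublyStochastic ℝ ι)
    (hι : 2 ≤ Fintype.card ι) :
    ∑ j, max (1 / 2 : ℝ) (⨆ i, M i j) ≤
      (⨆ σ : Equiv.Perm ι, ∑ i, M i (σ i)) + ((Fintype.card ι : ℝ) - 2) / 2 := by
  suffices ∃ σ : Equiv.Perm ι, ∑ j, max (1 / 2 : ℝ) (⨆ i, M i j) ≤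
      ∑ i, M i (σ i) + ((Fintype.card ι : ℝ) - 2) / 2 by
    obtain ⟨σ, hσ⟩ := this
    have := le_ciSup (f := fun σ : Equiv.Perm ι => ∑ i, M i (σ i)) (Set.finite_range _).bddAbove σ
    linarith
  have : Nonempty ι := (Fintype.card_pos_iff (α := ι)).mp (by omega)
  choose r hr using fun j => exists_eq_ciSup_of_finite (f := fun i => M i j)
  simp only [← hr]
  rw [sum_max_eq_sum_filter_add]
  set I : Finset ι := {j | 1 / 2 < M (r j) j}
  have hcard : (#{j | ¬ 1 / 2 < M (r j) j} : ℝ) = Fintype.card ι - #I := by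
    rw [eq_sub_iff_add_eq, ← Nat.cast_add, add_comm, card_filter_add_card_filter_not, card_univ]
  have hN : (2 : ℝ) ≤ Fintype.card ι := by exact_mod_cast hι
  rw [hcard]
  obtain hI | hI | hI : #I = 0 ∨ #I = 1 ∨ 2 ≤ #I := by omega
  · obtain ⟨σ, hσ⟩ := exists_perm_one_le_sum hM
    refine ⟨σ, ?_⟩
    simp only [card_eq_zero.mp hI, sum_empty, card_empty, Nat.cast_zero]
    linarith
  · obtain ⟨j, hj⟩ := card_eq_one.mp hI
    have hjI : j ∈ I := by simp [hj]
    have hhalf : 1 / 2 < M (r j) j := (mem_filter.mp hjI).2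
    obtain ⟨σ, hσ⟩ := exists_perm_apply_add_le_sum hM (by omega) (r j) j
    refine ⟨σ, ?_⟩
    have : 1 / 2 ≤ (Fintype.card ι - 2 + M (r j) j) / (Fintype.card ι - 1) := by
      rw [le_div_iff₀ (by linarith)]; linarith
    simp only [hj, sum_singleton, card_singleton, Nat.cast_one]
    linarith
  · have hinj : Set.InjOn r I := by
      intro j hj j' hj' hjj'
      by_contra hne
      have h1 := (mem_filter.mp hj).2
      have h2 := (mem_filter.mp hj').2
      rw [← hjj'] at h2
      have := sum_le_univ_sum_of_nonneg (s := {j, j'}) (fun b => hM.1 (r j) b)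
      rw [sum_pair hne, sum_row_of_mem_doublyStochastic hM] at this
      linarith
    obtain ⟨σ, hσ⟩ := exists_perm_sum_le_sum_of_injOn hM.1 hinj
    refine ⟨σ, ?_⟩
    have : (2 : ℝ) ≤ #I := by exact_mod_cast hI
    linarith

end Matrix

/-- For every `n × n` unitary matrix `U`,
`∑_i max{1/2, max_k |u_{k,i}|²} − max_σ ∑_i |u_{i,σ(i)}|² ≤ (n−2)/2`; consequently, for any
orthonormal LDOI basis the PPT upper bound exceeds the product-measurement lower bound by at
most `(n−2)/(2n²)`. -/
theorem ppt_locc_gap (n : ℕ) (hn : 2 ≤ n) (U : Matrix (Fin n) (Fin n) ℂ)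
    (hU : Uᴴ * U = 1) :
    (∑ i, max (1 / 2 : ℝ) (⨆ k, ‖U k i‖ ^ 2)) -
        (⨆ σ : Equiv.Perm (Fin n), ∑ i, ‖U i (σ i)‖ ^ 2) ≤
      ((n : ℝ) - 2) / 2 ∧
    (∀ A : Matrix (Fin n) (Fin n) ℂ,
      (∀ i j : Fin n, i ≠ j → ‖A i j‖ ^ 2 + ‖A j i‖ ^ 2 = 1) →
      (1 / (n : ℝ) ^ 2) *
          ((∑ i, ∑ j, if i = j then 0 else
              max (‖A i j‖ ^ 2) (‖A j i‖ ^ 2)) +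
            ∑ i, max (1 / 2 : ℝ) (⨆ k, ‖U k i‖ ^ 2)) -
        (1 / (n : ℝ) ^ 2) *
          ((∑ i, ∑ j, if i = j then 0 else
              max (‖A i j‖ ^ 2) (‖A j i‖ ^ 2)) +
            ⨆ σ : Equiv.Perm (Fin n), ∑ i, ‖U i (σ i)‖ ^ 2) ≤
        ((n : ℝ) - 2) / (2 * (n : ℝ) ^ 2)) := by
  have hgap := sum_max_half_ciSup_le
    (normSq_mem_doublyStochastic (mem_unitaryGroup_iff'.mpr hU)) (by simpa using hn)
  simp only [of_apply, Fintype.card_fin] at hgap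
  refine ⟨by linarith, fun A _ => ?_⟩
  rw [← mul_sub, add_sub_add_left_eq_sub]
  calc _ ≤ 1 / (n : ℝ) ^ 2 * (((n : ℝ) - 2) / 2) := by gcongr; linarith
    _ = ((n : ℝ) - 2) / (2 * (n : ℝ) ^ 2) := by ring
end
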